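/- arXiv:math/9906141 — 8 statements merged into one kernel-verified Lean document; each statement's English description precedes it below -/
import Mathlib

section
/- Let R be an exchange ring and let e_1, …, e_n ∈ R be idempotents. Then there exists an idempotent e ∈ e_1R + ⋯ + e_nR such that e_1R ⊆ eR and, for every i, the right R-module e_iR is isomorphic to a direct summand of eR. In particular, ReR = Re_1R + ⋯ + Re_nR. -/
/-!
Write `x ≾ y` when there are `a ∈ yRx`, `b ∈ xRy` with `ba = x`, i.e. `xR` is isomorphic to a
direct summand of `yR`. Induct on the number of idempotents. Given an idempotent `E` and a new
idempotent `f`, the exchange property of the corner ring `fRf`, applied to `fEf`, splits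
`f = p + p'` into orthogonal idempotents with `p ∈ fEfR` and `p' ∈ f(1 - E)fR`. Then `p ≾ E`,
and `p' ≾ q` for an idempotent `q ∈ (1 - E)fR(1 - E)`; so `g = E + q` is an idempotent in
`ER + fR` with `gE = E = Eg` and `f ≾ g`. Finally `x ≾ y` gives `x = b(ya) ∈ RyR`, which with
`E ∈ ∑ eᵢR` yields the equality of two-sided ideals.
-/

universe u

/-- A unital ring `R` is an *exchange ring* if for every `a ∈ R` there exists an
idempotent `e ∈ aR` such that `1 - e ∈ (1 - a)R`. -/
def IsExchangeRing (R : Type*) [Ring R] : Prop :=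
  ∀ a : R, ∃ e r s : R, IsIdempotentElem e ∧ e = a * r ∧ 1 - e = (1 - a) * s

/-- `xR` is isomorphic to a direct summand of `yR`, via left multiplication by `a` and `b`. -/
def Subequivalent {R : Type*} [Ring R] (x y : R) : Prop :=
  ∃ a b : R, y * a = a ∧ a * x = a ∧ x * b = b ∧ b * y = b ∧ b * a = x

namespace Subequivalent

variable {R : Type*} [Ring R] {x y z x' y' : R}

theorem isIdempotentElem (h : Subequivalent x y) : IsIdempotentElem x := by
  obtain ⟨a, b, -, hax, -, -, hba⟩ := h
  calc x * x = b * a * x := by rw [hba]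
    _ = x := by rw [mul_assoc, hax, hba]

theorem refl (hx : IsIdempotentElem x) : Subequivalent x x :=
  ⟨x, x, hx, hx, hx, hx, hx⟩

theorem of_mul_eq (hy : IsIdempotentElem y) (hzy : z * y = y) (hyz : y * z = y) :
    Subequivalent y z :=
  ⟨y, y, hzy, hy, hy, hyz, hy⟩

theorem trans (h₁ : Subequivalent x y) (h₂ : Subequivalent y z) : Subequivalent x z := by
  obtain ⟨a₁, b₁, hya₁, ha₁x, hxb₁, hb₁y, hb₁a₁⟩ := h₁
  obtain ⟨a₂, b₂, hza₂, ha₂y, hyb₂, hb₂z, hb₂a₂⟩ := h₂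
  refine ⟨a₂ * a₁, b₁ * b₂, ?_, ?_, ?_, ?_, ?_⟩
  · rw [← mul_assoc, hza₂]
  · rw [mul_assoc, ha₁x]
  · rw [← mul_assoc, hxb₁]
  · rw [mul_assoc, hb₂z]
  · rw [mul_assoc, ← mul_assoc b₂, hb₂a₂, ← mul_assoc, hb₁y, hb₁a₁]

theorem add (h : Subequivalent x y) (h' : Subequivalent x' y')
    (hxx' : x * x' = 0) (hx'x : x' * x = 0) (hyy' : y * y' = 0) (hy'y : y' * y = 0) :
    Subequivalent (x + x') (y + y') := by
  obtain ⟨a, b, hya, hax, hxb, hby, hba⟩ := h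
  obtain ⟨a', b', hya', hax', hxb', hby', hba'⟩ := h'
  have hya'0 : y * a' = 0 := by rw [← hya', ← mul_assoc, hyy', zero_mul]
  have hy'a0 : y' * a = 0 := by rw [← hya, ← mul_assoc, hy'y, zero_mul]
  have hax'0 : a * x' = 0 := by rw [← hax, mul_assoc, hxx', mul_zero]
  have ha'x0 : a' * x = 0 := by rw [← hax', mul_assoc, hx'x, mul_zero]
  have hxb'0 : x * b' = 0 := by rw [← hxb', ← mul_assoc, hxx', zero_mul]
  have hx'b0 : x' * b = 0 := by rw [← hxb, ← mul_assoc, hx'x, zero_mul]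
  have hby'0 : b * y' = 0 := by rw [← hby, mul_assoc, hyy', mul_zero]
  have hb'y0 : b' * y = 0 := by rw [← hby', mul_assoc, hy'y, mul_zero]
  have hba'0 : b * a' = 0 := by rw [← hya', ← mul_assoc, hby'0, zero_mul]
  have hb'a0 : b' * a = 0 := by rw [← hya, ← mul_assoc, hb'y0, zero_mul]
  refine ⟨a + a', b + b', ?_, ?_, ?_, ?_, ?_⟩ <;>
    simp only [mul_add, add_mul, *, add_zero, zero_add]

/-- The witnesses are `a = ywx`, `b = xuy`, and `q = ab` cuts out the image of `xR` in `yR`. -/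
theorem exists_le_of_eq_mul_mul {u w : R} (hx : IsIdempotentElem x) (hy : IsIdempotentElem y)
    (hxy : x = u * y * w) :
    ∃ q c : R, IsIdempotentElem q ∧ y * q = q ∧ q * y = q ∧ Subequivalent x q ∧
      q = y * w * c := by
  set a := y * w * x
  set b := x * u * y
  have hba : b * a = x := by
    calc b * a = x * (u * (y * y) * w) * x := by simp only [a, b, mul_assoc]
      _ = x := by rw [hy.eq, ← hxy, hx.eq, hx.eq]
  have hya : y * a = a := by simp only [a, ← mul_assoc, hy.eq]
  have hax : a * x = a := by simp only [a, mul_assoc, hx.eq]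
  have hxb : x * b = b := by simp only [b, ← mul_assoc, hx.eq]
  have hby : b * y = b := by simp only [b, mul_assoc, hy.eq]
  have hqa : a * b * a = a := by rw [mul_assoc, hba, hax]
  have hbq : b * (a * b) = b := by rw [← mul_assoc, hba, hxb]
  refine ⟨a * b, x * b, ?_, ?_, ?_, ⟨a, b, hqa, hax, hxb, hbq, hba⟩, ?_⟩
  · rw [IsIdempotentElem, ← mul_assoc, hqa]
  · rw [← mul_assoc, hya]
  · rw [mul_assoc, hby]
  · simp only [a, mul_assoc]

theorem of_eq_mul_mul {u w : R} (hx : IsIdempotentElem x) (hy : IsIdempotentElem y)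
    (hxy : x = u * y * w) : Subequivalent x y := by
  obtain ⟨q, -, hq, hyq, hqy, hxq, -⟩ := exists_le_of_eq_mul_mul hx hy hxy
  exact hxq.trans (of_mul_eq hq hyq hqy)

theorem twoSidedIdeal_span_le (h : Subequivalent x y) :
    TwoSidedIdeal.span {x} ≤ TwoSidedIdeal.span {y} := by
  obtain ⟨a, b, hya, -, -, -, hba⟩ := h
  rw [TwoSidedIdeal.span_le, Set.singleton_subset_iff, ← hba, ← hya, ← mul_assoc]
  exact TwoSidedIdeal.mul_mem_right _ _ _
    (TwoSidedIdeal.mul_mem_left _ _ _ (TwoSidedIdeal.subset_span rfl))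

theorem exists_splitting (h : Subequivalent x y) :
    ∃ (f : Submodule.span Rᵐᵒᵖ {x} →ₗ[Rᵐᵒᵖ] Submodule.span Rᵐᵒᵖ {y})
      (g : Submodule.span Rᵐᵒᵖ {y} →ₗ[Rᵐᵒᵖ] Submodule.span Rᵐᵒᵖ {x}),
      g.comp f = LinearMap.id := by
  have hx := h.isIdempotentElem
  obtain ⟨a, b, hya, -, hxb, -, hba⟩ := h
  have mem_span {c d : R} (hdc : d * c = c) (r : R) : c * r ∈ Submodule.span Rᵐᵒᵖ {d} :=
    Submodule.mem_span_singleton.mpr ⟨.op (c * r), by simp [← mul_assoc, hdc]⟩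
  refine ⟨(DistribSMul.toLinearMap Rᵐᵒᵖ R a).restrict fun r _ ↦ mem_span hya r,
    (DistribSMul.toLinearMap Rᵐᵒᵖ R b).restrict fun r _ ↦ mem_span hxb r, ?_⟩
  ext ⟨r, hr⟩
  obtain ⟨s, rfl⟩ := Submodule.mem_span_singleton.mp hr
  change b * (a * (x * s.unop)) = x * s.unop
  rw [← mul_assoc, ← mul_assoc, hba, hx.eq]

end Subequivalent

namespace IsExchangeRing

variable {R : Type*} [Ring R]

/-- The corner ring `fRf` inherits the exchange property: apply it in `R` to `1 - a`. -/
theorem exists_exchange_in_corner (hR : IsExchangeRing R) {f a : R} (hf : IsIdempotentElem f)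
    (ha : f * a * f = a) :
    ∃ p : R, IsIdempotentElem p ∧ p * f = p ∧ f * p = p ∧ (∃ s, p = a * s) ∧
      ∃ t, f - p = (f - a) * t := by
  obtain ⟨P, t₀, t₁, hP, hPt₀, hPt₁⟩ := hR (1 - a)
  have hPa : 1 - P = a * t₁ := by rw [hPt₁, sub_sub_cancel]
  have hfa : f * a = a := by rw [← ha, ← mul_assoc, ← mul_assoc, hf.eq]
  have hfP : f * (1 - P) = 1 - P := by rw [hPa, ← mul_assoc, hfa]
  refine ⟨(1 - P) * f, ?_, ?_, ?_, ⟨t₁ * f, by rw [hPa, mul_assoc]⟩, ⟨t₀ * f, ?_⟩⟩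
  · rw [IsIdempotentElem, mul_assoc, ← mul_assoc f, hfP, ← mul_assoc, hP.one_sub.eq]
  · rw [mul_assoc, hf.eq]
  · rw [← mul_assoc, hfP]
  · calc f - (1 - P) * f = f * f - f * (1 - P) * f := by rw [hfP, hf.eq]
      _ = f * ((1 - a) * t₀) * f := by rw [← hPt₀]; noncomm_ring
      _ = (f - f * a) * (t₀ * f) := by noncomm_ring
      _ = (f - a) * (t₀ * f) := by rw [hfa]

theorem exists_idempotent_extension (hR : IsExchangeRing R) {E f : R}
    (hE : IsIdempotentElem E) (hf : IsIdempotentElem f) :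
    ∃ g : R, IsIdempotentElem g ∧ g ∈ Submodule.span Rᵐᵒᵖ {E, f} ∧ g * E = E ∧ E * g = E ∧
      Subequivalent f g := by
  have hcorner : f * (f * E * f) * f = f * E * f := by
    rw [← mul_assoc, ← mul_assoc, hf.eq, mul_assoc _ f f, hf.eq]
  obtain ⟨p, hp, hpf, hfp, ⟨s, hps⟩, ⟨t, hp't⟩⟩ := hR.exists_exchange_in_corner hf hcorner
  rw [show f - f * E * f = f * (1 - E) * f by rw [mul_sub, mul_one, sub_mul, hf.eq]] at hp't
  have hp' : IsIdempotentElem (f - p) := hp.sub hf hpf hfp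
  have hpp' : p * (f - p) = 0 := by rw [mul_sub, hpf, hp.eq, sub_self]
  have hp'p : (f - p) * p = 0 := by rw [sub_mul, hfp, hp.eq, sub_self]
  have hpE : Subequivalent p E :=
    .of_eq_mul_mul hp hE (u := f) (w := f * s) (by rw [hps, mul_assoc])
  obtain ⟨q, c, hq, hEq', hqE', hp'q, hqc⟩ :=
    Subequivalent.exists_le_of_eq_mul_mul hp' hE.one_sub (u := f) (w := f * t)
      (by rw [hp't, mul_assoc])
  have hEq : E * q = 0 := by rw [← hEq', ← mul_assoc, mul_sub, mul_one, hE.eq, sub_self, zero_mul]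
  have hqE : q * E = 0 := by rw [← hqE', mul_assoc, sub_mul, one_mul, hE.eq, sub_self, mul_zero]
  refine ⟨E + q, hE.add hq (by rw [hEq, hqE, add_zero]), ?_, by rw [add_mul, hE.eq, hqE, add_zero],
    by rw [mul_add, hE.eq, hEq, add_zero], ?_⟩
  · refine Submodule.mem_span_pair.mpr ⟨.op (1 - f * t * c), .op (t * c), ?_⟩
    simp only [MulOpposite.smul_eq_mul_unop, MulOpposite.unop_op, hqc]
    noncomm_ring
  · rw [← add_sub_cancel p f]
    exact hpE.add hp'q hpp' hp'p hEq hqE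

theorem exists_idempotent_subequivalent (hR : IsExchangeRing R) (n : ℕ) (e : Fin (n + 1) → R)
    (he : ∀ i, IsIdempotentElem (e i)) :
    ∃ E : R, IsIdempotentElem E ∧ E ∈ Submodule.span Rᵐᵒᵖ (Set.range e) ∧ E * e 0 = e 0 ∧
      ∀ i, Subequivalent (e i) E := by
  induction n with
  | zero =>
    refine ⟨e 0, he 0, Submodule.subset_span ⟨0, rfl⟩, (he 0).eq, fun i ↦ ?_⟩
    rw [Fin.eq_zero i]
    exact .refl (he 0)
  | succ n ih =>
    obtain ⟨E, hE, hEspan, hE0, hsub⟩ := ih (fun i ↦ e i.castSucc) (fun i ↦ he _)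
    obtain ⟨g, hg, hgspan, hgE, hEg, hfg⟩ := hR.exists_idempotent_extension hE (he (Fin.last _))
    refine ⟨g, hg, ?_, ?_, fun i ↦ ?_⟩
    · refine Submodule.span_le.mpr (Set.insert_subset_iff.mpr ⟨?_, ?_⟩) hgspan
      · refine Submodule.span_mono ?_ hEspan
        rintro _ ⟨i, rfl⟩
        exact ⟨_, rfl⟩
      · exact Set.singleton_subset_iff.mpr (Submodule.subset_span ⟨_, rfl⟩)
    · calc g * e 0 = g * E * e 0 := by rw [mul_assoc, ← Fin.castSucc_zero, hE0]
        _ = e 0 := by rw [hgE, ← Fin.castSucc_zero, hE0]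
    · induction i using Fin.lastCases with
      | last => exact hfg
      | cast i => exact (hsub i).trans (.of_mul_eq hE hgE hEg)

end IsExchangeRing

/-- Right ideals of `R` are `Rᵐᵒᵖ`-submodules of `R`, with `xR = Submodule.span Rᵐᵒᵖ {x}`;
"`e_iR` is isomorphic to a direct summand of `eR`" is expressed by a split `Rᵐᵒᵖ`-linear
injection `e_iR → eR`; the two-sided ideal `RxR` is `TwoSidedIdeal.span {x}`, and the sum of
two-sided ideals is their supremum. -/
theorem stmt0 (R : Type u) [Ring R] (hR : IsExchangeRing R)
    (n : ℕ) (e : Fin (n + 1) → R) (he : ∀ i, IsIdempotentElem (e i)) :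
    ∃ E : R, IsIdempotentElem E ∧
      (∃ r : Fin (n + 1) → R, E = ∑ i, e i * r i) ∧
      Submodule.span Rᵐᵒᵖ {e 0} ≤ Submodule.span Rᵐᵒᵖ {E} ∧
      (∀ i, ∃ (f : Submodule.span Rᵐᵒᵖ {e i} →ₗ[Rᵐᵒᵖ] Submodule.span Rᵐᵒᵖ {E})
            (g : Submodule.span Rᵐᵒᵖ {E} →ₗ[Rᵐᵒᵖ] Submodule.span Rᵐᵒᵖ {e i}),
            g.comp f = LinearMap.id) ∧
      TwoSidedIdeal.span {E} = ⨆ i, TwoSidedIdeal.span {e i} := by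
  obtain ⟨E, hE, hEspan, hE0, hsub⟩ := hR.exists_idempotent_subequivalent n e he
  obtain ⟨c, hc⟩ := (Submodule.mem_span_range_iff_exists_fun Rᵐᵒᵖ).mp hEspan
  have hEsum : E = ∑ i, e i * (c i).unop := by
    simp only [← hc, MulOpposite.smul_eq_mul_unop]
  refine ⟨E, hE, ⟨_, hEsum⟩, ?_, fun i ↦ (hsub i).exists_splitting,
    le_antisymm ?_ (iSup_le fun i ↦ (hsub i).twoSidedIdeal_span_le)⟩
  · rw [Submodule.span_singleton_le_iff_mem, ← hE0]
    exact Submodule.mem_span_singleton.mpr ⟨.op (e 0), rfl⟩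
  · rw [TwoSidedIdeal.span_le, Set.singleton_subset_iff, hEsum]
    exact sum_mem fun i _ ↦ TwoSidedIdeal.mul_mem_right _ _ _
      (le_iSup (fun i ↦ TwoSidedIdeal.span {e i}) i (TwoSidedIdeal.subset_span rfl))
end

section
/- Let R be an exchange ring and a ∈ R an element such that RaR = R. Then there exist idempotents e ∈ aR and f ∈ Ra such that ReR = R and RfR = R. -/
/-!
Write an idempotent `q` as `u * z * v` with `z ∈ RaR` and induct on `z`. For `z = a`, the
idempotent `u * (a * v)` generates the same ideal as the idempotent `(a * v * u) ^ 2 ∈ aR`. For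
`z = z₁ + z₂`, the exchange property in the corner ring `qRq` splits `q = g + (q - g)` into
orthogonal idempotents with `g ∈ q z₁ R` and `q - g ∈ q z₂ R`, both covered by induction. The sum
step closes because the ideals `ReR` with `e = e² ∈ aR` form a directed family: for idempotents
`e₁, e₂`, exchange in `(1 - e₁)R(1 - e₁)` yields an idempotent `g` orthogonal to `e₁` such that
`e₁ + g ∈ e₁R + e₂R` generates an ideal containing `e₁` and `e₂`. Taking `q = z = 1` gives
`e = a * r` with `ReR = R`, and then `f = (r * a) ^ 2`.
-/

universe u

open TwoSidedIdeal

variable {R : Type*} [Ring R]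

lemma IsIdempotentElem.swap_mul_sq {u v : R} (h : IsIdempotentElem (u * v)) :
    IsIdempotentElem ((v * u) ^ 2) := by
  calc (v * u) ^ 2 * (v * u) ^ 2 = v * ((u * v) * (u * v) * (u * v)) * u := by noncomm_ring
    _ = (v * u) ^ 2 := by rw [h.eq, h.eq]; noncomm_ring

lemma IsIdempotentElem.mem_span_swap_mul_sq {u v : R} (h : IsIdempotentElem (u * v)) :
    u * v ∈ span {(v * u) ^ 2} := by
  have : u * v = u * (v * u) ^ 2 * v := by
    calc u * v = (u * v) * (u * v) * (u * v) := by rw [h.eq, h.eq]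
      _ = u * (v * u) ^ 2 * v := by noncomm_ring
  rw [this]
  exact mul_mem_right _ _ _ (mul_mem_left _ _ _ (subset_span rfl))

def MemIdempotentSpan (a x : R) : Prop :=
  ∃ e r : R, IsIdempotentElem e ∧ e = a * r ∧ x ∈ span {e}

lemma memIdempotentSpan_of_eq_mul_mul {a q u v : R} (hq : IsIdempotentElem q)
    (hquv : q = u * a * v) : MemIdempotentSpan a q := by
  rw [hquv, mul_assoc] at hq ⊢
  exact ⟨_, v * u * (a * (v * u)), hq.swap_mul_sq, by noncomm_ring, hq.mem_span_swap_mul_sq⟩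

namespace IsExchangeRing

variable (hR : IsExchangeRing R)
include hR

/-- The exchange property passes to the corner ring `qRq`. -/
lemma exists_isIdempotentElem_corner {q b : R} (hq : IsIdempotentElem q) (hqb : q * b = b) :
    ∃ g r s : R, IsIdempotentElem g ∧ g = b * r ∧ q - g = (q - b) * s ∧
      q * g = g ∧ g * q = g := by
  obtain ⟨e, r, s, he, her, hes⟩ := hR b
  have hqe : q * e = e := by rw [her, ← mul_assoc, hqb]
  refine ⟨e * q, r * q, s * q, ?_, by rw [her, mul_assoc], ?_, by rw [← mul_assoc, hqe],
    by rw [mul_assoc, hq.eq]⟩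
  · rw [IsIdempotentElem, mul_assoc, ← mul_assoc q, hqe, ← mul_assoc, he.eq]
  · calc q - e * q = q * (1 - e) * q := by rw [mul_sub, mul_one, sub_mul, hqe, hq.eq]
      _ = (q - q * b) * (s * q) := by rw [hes]; noncomm_ring
      _ = (q - b) * (s * q) := by rw [hqb]

lemma exists_isIdempotentElem_mem_span_pair {e₁ e₂ : R} (h₁ : IsIdempotentElem e₁)
    (h₂ : IsIdempotentElem e₂) :
    ∃ h x y : R, IsIdempotentElem h ∧ h = e₁ * x + e₂ * y ∧
      e₁ ∈ span {h} ∧ e₂ ∈ span {h} := by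
  have hb : (1 - e₁) * ((1 - e₁) * e₂ * (1 - e₁)) = (1 - e₁) * e₂ * (1 - e₁) := by
    rw [← mul_assoc, ← mul_assoc, h₁.one_sub.eq]
  obtain ⟨g, t, s, hg, hgt, hgs, hpg, hgp⟩ := hR.exists_isIdempotentElem_corner h₁.one_sub hb
  have hge₁ : g * e₁ = 0 := by rw [← hgp, mul_assoc, h₁.one_sub_mul_self, mul_zero]
  have he₁g : e₁ * g = 0 := by rw [← hpg, ← mul_assoc, h₁.mul_one_sub_self, zero_mul]
  obtain ⟨w, hgw⟩ : ∃ w, g = (1 - e₁) * (e₂ * w) :=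
    ⟨(1 - e₁) * t * g, by nth_rw 1 [← hg.eq, hgt]; noncomm_ring⟩
  have hmem₁ : e₁ ∈ span {e₁ + g} := by
    have := mul_mem_left _ e₁ _ (subset_span rfl : e₁ + g ∈ span {e₁ + g})
    rwa [mul_add, h₁.eq, he₁g, add_zero] at this
  have hmem_g : g ∈ span {e₁ + g} := by
    simpa using sub_mem _ (subset_span rfl : e₁ + g ∈ span {e₁ + g}) hmem₁
  have hmem₂ : e₂ ∈ span {e₁ + g} := by
    have : e₂ = e₂ * e₁ + e₂ * g + e₂ * e₁ * (e₂ * (1 - e₁) * s) := by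
      linear_combination (norm := noncomm_ring) e₂ * hgs - h₂.eq * ((1 - e₁) * s)
    rw [this]
    exact add_mem _ (add_mem _ (mul_mem_left _ _ _ hmem₁) (mul_mem_left _ _ _ hmem_g))
      (mul_mem_right _ _ _ (mul_mem_left _ _ _ hmem₁))
  refine ⟨e₁ + g, 1 - e₂ * w, w, h₁.add hg (by rw [he₁g, hge₁, add_zero]), ?_, hmem₁, hmem₂⟩
  rw [hgw]
  noncomm_ring

lemma memIdempotentSpan_add {a x y : R} (hx : MemIdempotentSpan a x)
    (hy : MemIdempotentSpan a y) : MemIdempotentSpan a (x + y) := by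
  obtain ⟨e₁, r₁, h₁, rfl, hx⟩ := hx
  obtain ⟨e₂, r₂, h₂, rfl, hy⟩ := hy
  obtain ⟨h, x', y', hh, hxy, hmem₁, hmem₂⟩ := hR.exists_isIdempotentElem_mem_span_pair h₁ h₂
  refine ⟨h, r₁ * x' + r₂ * y', hh, by rw [hxy]; noncomm_ring, add_mem _ ?_ ?_⟩
  · exact span_le.2 (Set.singleton_subset_iff.2 hmem₁) hx
  · exact span_le.2 (Set.singleton_subset_iff.2 hmem₂) hy

lemma memIdempotentSpan_of_mem_span {a z q u v : R} (hz : z ∈ span {a})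
    (hq : IsIdempotentElem q) (hquv : q = u * z * v) : MemIdempotentSpan a q := by
  induction hz using span_induction generalizing q u v with
  | mem x hx =>
    rw [Set.mem_singleton_iff.1 hx] at hquv
    exact memIdempotentSpan_of_eq_mul_mul hq hquv
  | zero =>
    rw [hquv, mul_zero, zero_mul]
    exact ⟨0, 0, .zero, (mul_zero a).symm, TwoSidedIdeal.zero_mem _⟩
  | add z₁ z₂ _ _ ih₁ ih₂ =>
    have hqb : q * (q * (u * z₁ * v) * q) = q * (u * z₁ * v) * q := by
      rw [← mul_assoc, ← mul_assoc, hq.eq]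
    obtain ⟨g, r, s, hg, hgr, hgs, hqg, hgq⟩ := hR.exists_isIdempotentElem_corner hq hqb
    have hg_mem : MemIdempotentSpan a g :=
      ih₁ (u := q * u) (v := v * q * r) hg (by rw [hgr]; noncomm_ring)
    have hq_sub : q - q * (u * z₁ * v) * q = q * (u * z₂ * v) * q := by
      calc q - q * (u * z₁ * v) * q
          = q * (u * (z₁ + z₂) * v) * q - q * (u * z₁ * v) * q := by rw [← hquv, hq.eq, hq.eq]
        _ = q * (u * z₂ * v) * q := by noncomm_ring
    have hqg_mem : MemIdempotentSpan a (q - g) :=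
      ih₂ (u := q * u) (v := v * q * s) (hg.sub hq hgq hqg) (by rw [hgs, hq_sub]; noncomm_ring)
    simpa using hR.memIdempotentSpan_add hg_mem hqg_mem
  | neg z _ ih => exact ih (u := -u) hq (by rw [hquv]; noncomm_ring)
  | left_absorb c z _ ih => exact ih (u := u * c) hq (by rw [hquv]; noncomm_ring)
  | right_absorb c z _ ih => exact ih (v := c * v) hq (by rw [hquv]; noncomm_ring)

end IsExchangeRing

/-- The two-sided ideal `RxR` generated by `x` is `TwoSidedIdeal.span {x}`. -/
theorem stmt1 (R : Type u) [Ring R] (hR : IsExchangeRing R)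
    (a : R) (ha : TwoSidedIdeal.span ({a} : Set R) = ⊤) :
    ∃ e f r s : R, IsIdempotentElem e ∧ IsIdempotentElem f ∧
      e = a * r ∧ f = s * a ∧
      TwoSidedIdeal.span ({e} : Set R) = ⊤ ∧ TwoSidedIdeal.span ({f} : Set R) = ⊤ := by
  obtain ⟨e, r, he, rfl, h1e⟩ := hR.memIdempotentSpan_of_mem_span ((one_mem_iff _).2 ha)
    (u := 1) (v := 1) .one (by rw [mul_one, mul_one])
  refine ⟨a * r, (r * a) ^ 2, r, r * a * r, he, he.swap_mul_sq, rfl, by noncomm_ring,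
    (one_mem_iff _).1 h1e, (one_mem_iff _).1 ?_⟩
  exact span_le.2 (Set.singleton_subset_iff.2 he.mem_span_swap_mul_sq) h1e
end

section
/- Let R be any unital ring, n ≥ 1, and A ∈ GL_n(R) an invertible matrix having at least one entry that is an idempotent of R. Then there exist matrices E, F ∈ E_n(R) such that the matrix EAF has (1,1) entry equal to 1 and all other entries of its first row and of its first column equal to 0. -/
/-!
Signed permutation matrices, which lie in `E_n(R)`, move the idempotent entry `e` to the corner
`(z, z)`. With `B` a right inverse of the new matrix, adding to column `z` the other columns,
the `k`-th weighted by `B k z * (1 - e)`, turns the corner into `1 - x` with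
`x = e * B z z * (1 - e)`; then `x ^ 2 = 0` because `(1 - e) * e = 0`. The matrix `1 + x • e_zz`
is the commutator of the transvections `1 + e • e_zw` and `1 + (B z z * (1 - e)) • e_wz`, and
multiplying by it turns the corner into `(1 + x) * (1 - x) = 1`. Once the corner is a unit, the rest
of its row and column is cleared by transvections. For `n = 1` an idempotent with a right inverse
is already `1`.
-/

universe u

/-- `E_ι(R)`: the subgroup of `GL_ι(R) = (Matrix ι ι R)ˣ` generated by the elementary
matrices (transvections) `1 + r·e_{ij}`, `i ≠ j`. -/
def ElementarySubgroup (ι : Type*) [Fintype ι] [DecidableEq ι] (R : Type*) [Ring R] :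
    Subgroup (Matrix ι ι R)ˣ :=
  Subgroup.closure
    {E : (Matrix ι ι R)ˣ | ∃ i j : ι, ∃ r : R, i ≠ j ∧ E.val = 1 + Matrix.single i j r}

open Matrix

variable {ι : Type*} [Fintype ι] [DecidableEq ι] {R : Type*} [Ring R]

namespace Matrix

lemma mul_single_apply (M : Matrix ι ι R) (z k : ι) (a : R) (i j : ι) :
    (M * single z k a) i j = if j = k then M i z * a else 0 := by
  split_ifs with h
  · rw [h, mul_single_apply_same]
  · exact mul_single_apply_of_ne _ _ _ _ _ h _

lemma single_mul_apply (M : Matrix ι ι R) (k z : ι) (a : R) (i j : ι) :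
    (single k z a * M) i j = if i = k then a * M z j else 0 := by
  split_ifs with h
  · rw [h, single_mul_apply_same]
  · exact single_mul_apply_of_ne _ _ _ _ _ h _

lemma mul_one_add_sum_single_apply (M : Matrix ι ι R) (z : ι) (s : Finset ι) (c : ι → R)
    (i j : ι) :
    (M * (1 + ∑ k ∈ s, single z k (c k))) i j = M i j + if j ∈ s then M i z * c j else 0 := by
  simp [mul_add, Finset.mul_sum, Matrix.sum_apply, mul_single_apply]

lemma one_add_sum_single_mul_apply (M : Matrix ι ι R) (z : ι) (s : Finset ι) (c : ι → R)
    (i j : ι) :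
    ((1 + ∑ k ∈ s, single k z (c k)) * M) i j = M i j + if i ∈ s then c i * M z j else 0 := by
  simp [add_mul, Finset.sum_mul, Matrix.sum_apply, single_mul_apply]

lemma mul_one_add_sum_single_apply_self (M : Matrix ι ι R) (z : ι) (s : Finset ι) (c : ι → R)
    (i : ι) :
    (M * (1 + ∑ k ∈ s, single k z (c k))) i z = M i z + ∑ k ∈ s, M i k * c k := by
  simp [mul_add, Finset.mul_sum, Matrix.sum_apply]

lemma one_add_single_mul_apply_same (M : Matrix ι ι R) (z : ι) (x : R) (j : ι) :
    ((1 + single z z x) * M) z j = (1 + x) * M z j := by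
  simp [add_mul]

lemma three_transvections_eq_signed_swap {a b : ι} (hab : a ≠ b) :
    (1 + single a b (1 : R)) * (1 + single b a (-1)) * (1 + single a b 1) =
      1 + single a b 1 - single b a 1 - single a a 1 - single b b 1 := by
  simp [add_mul, mul_add, hab.symm, ← single_neg]
  abel

end Matrix

variable (ι R) in
/-- `E_ι(R)` as a submonoid of matrices, so that membership can be tested on the matrices
themselves, without carrying their inverses along. -/
def elementaryMatrices : Submonoid (Matrix ι ι R) :=
  (ElementarySubgroup ι R).toSubmonoid.map (Units.coeHom _)

lemma isUnit_of_mem_elementaryMatrices {M : Matrix ι ι R} (hM : M ∈ elementaryMatrices ι R) :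
    IsUnit M := by
  obtain ⟨U, -, rfl⟩ := hM
  exact U.isUnit

lemma one_add_single_mem_elementaryMatrices {i j : ι} (hij : i ≠ j) (r : R) :
    1 + single i j r ∈ elementaryMatrices ι R :=
  have hnil : IsNilpotent (single i j r) := ⟨2, by simp [sq, hij.symm]⟩
  ⟨hnil.isUnit_one_add.unit, Subgroup.subset_closure ⟨i, j, r, hij, rfl⟩, rfl⟩

lemma one_add_sum_single_col_mem_elementaryMatrices {z : ι} {s : Finset ι} (hz : z ∉ s)
    (c : ι → R) : 1 + ∑ k ∈ s, single k z (c k) ∈ elementaryMatrices ι R := by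
  induction s using Finset.induction_on with
  | empty => simp [(elementaryMatrices ι R).one_mem]
  | insert a s ha ih =>
    rw [Finset.mem_insert, not_or] at hz
    have hzero : single a z (c a) * ∑ k ∈ s, single k z (c k) = 0 := by
      rw [Finset.mul_sum]
      exact Finset.sum_eq_zero fun k hk =>
        single_mul_single_of_ne _ _ _ _ (ne_of_mem_of_not_mem hk hz.2).symm _
    have hfactor : 1 + ∑ k ∈ insert a s, single k z (c k) =
        (1 + single a z (c a)) * (1 + ∑ k ∈ s, single k z (c k)) := by
      rw [Finset.sum_insert ha, add_mul, one_mul, mul_add, mul_one, hzero]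
      abel
    rw [hfactor]
    exact mul_mem (one_add_single_mem_elementaryMatrices (Ne.symm hz.1) _) (ih hz.2)

lemma one_add_sum_single_row_mem_elementaryMatrices {z : ι} {s : Finset ι} (hz : z ∉ s)
    (c : ι → R) : 1 + ∑ k ∈ s, single z k (c k) ∈ elementaryMatrices ι R := by
  induction s using Finset.induction_on with
  | empty => simp [(elementaryMatrices ι R).one_mem]
  | insert a s ha ih =>
    rw [Finset.mem_insert, not_or] at hz
    have hzero : single z a (c a) * ∑ k ∈ s, single z k (c k) = 0 := by
      rw [Finset.mul_sum]
      exact Finset.sum_eq_zero fun k _ => single_mul_single_of_ne _ _ _ _ (Ne.symm hz.1) _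
    have hfactor : 1 + ∑ k ∈ insert a s, single z k (c k) =
        (1 + single z a (c a)) * (1 + ∑ k ∈ s, single z k (c k)) := by
      rw [Finset.sum_insert ha, add_mul, one_mul, mul_add, mul_one, hzero]
      abel
    rw [hfactor]
    exact mul_mem (one_add_single_mem_elementaryMatrices hz.1 _) (ih hz.2)

lemma one_add_single_mul_mem_elementaryMatrices {z w : ι} (hzw : z ≠ w) {a b : R}
    (hba : b * a = 0) : 1 + single z z (a * b) ∈ elementaryMatrices ι R := by
  have haba : a * b * a = 0 := by rw [mul_assoc, hba, mul_zero]
  have hcomm : (1 + single z w a) * (1 + single w z b) * (1 + single z w (-a)) *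
      (1 + single w z (-b)) = 1 + single z z (a * b) := by
    simp [add_mul, mul_add, hzw, hzw.symm, hba, haba, ← single_neg]
    abel
  rw [← hcomm]
  exact mul_mem (mul_mem (mul_mem (one_add_single_mem_elementaryMatrices hzw _)
    (one_add_single_mem_elementaryMatrices hzw.symm _))
    (one_add_single_mem_elementaryMatrices hzw _))
    (one_add_single_mem_elementaryMatrices hzw.symm _)

lemma exists_mem_elementaryMatrices_mul_apply_row (a b : ι) :
    ∃ P ∈ elementaryMatrices ι R, ∀ (N : Matrix ι ι R) k, (P * N) a k = N b k := by
  by_cases hab : a = b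
  · exact ⟨1, one_mem _, by simp [hab]⟩
  refine ⟨_, mul_mem (mul_mem (one_add_single_mem_elementaryMatrices hab 1)
    (one_add_single_mem_elementaryMatrices (Ne.symm hab) (-1)))
    (one_add_single_mem_elementaryMatrices hab 1), fun N k => ?_⟩
  rw [three_transvections_eq_signed_swap hab]
  simp [sub_mul, add_mul, single_mul_apply_of_ne _ _ _ _ _ hab]

lemma exists_mem_elementaryMatrices_mul_apply_col (a b : ι) :
    ∃ Q ∈ elementaryMatrices ι R, ∀ (N : Matrix ι ι R) k, (N * Q) k b = N k a := by
  by_cases hab : a = b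
  · exact ⟨1, one_mem _, by simp [hab]⟩
  refine ⟨_, mul_mem (mul_mem (one_add_single_mem_elementaryMatrices hab 1)
    (one_add_single_mem_elementaryMatrices (Ne.symm hab) (-1)))
    (one_add_single_mem_elementaryMatrices hab 1), fun N k => ?_⟩
  rw [three_transvections_eq_signed_swap hab]
  simp [mul_sub, mul_add, mul_single_apply_of_ne _ _ _ _ _ (Ne.symm hab)]

lemma exists_mem_elementaryMatrices_mul_apply_row_eq_zero (z : ι) (N : Matrix ι ι R) (u : Rˣ)
    (hu : N z z = u) :
    ∃ F ∈ elementaryMatrices ι R,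
      (∀ i, (N * F) i z = N i z) ∧ ∀ j ≠ z, (N * F) z j = 0 := by
  refine ⟨_, one_add_sum_single_row_mem_elementaryMatrices (Finset.notMem_erase z .univ)
    (fun k => -(↑u⁻¹ * N z k)), fun i => ?_, fun j hj => ?_⟩
  · rw [mul_one_add_sum_single_apply, if_neg (Finset.notMem_erase z _), add_zero]
  · rw [mul_one_add_sum_single_apply, if_pos (by simpa using hj), hu, mul_neg, ← mul_assoc,
      Units.mul_inv, one_mul, add_neg_cancel]

lemma exists_mem_elementaryMatrices_mul_apply_col_eq_zero (z : ι) (N : Matrix ι ι R) (u : Rˣ)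
    (hu : N z z = u) :
    ∃ E ∈ elementaryMatrices ι R,
      (∀ j, (E * N) z j = N z j) ∧ ∀ i ≠ z, (E * N) i z = 0 := by
  refine ⟨_, one_add_sum_single_col_mem_elementaryMatrices (Finset.notMem_erase z .univ)
    (fun k => -(N k z * ↑u⁻¹)), fun j => ?_, fun i hi => ?_⟩
  · rw [one_add_sum_single_mul_apply, if_neg (Finset.notMem_erase z _), add_zero]
  · rw [one_add_sum_single_mul_apply, if_pos (by simpa using hi), hu, neg_mul, mul_assoc,
      Units.inv_mul, mul_one, add_neg_cancel]

lemma exists_mem_elementaryMatrices_isolate_of_isUnit (z : ι) (N : Matrix ι ι R)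
    (hN : IsUnit (N z z)) :
    ∃ E ∈ elementaryMatrices ι R, ∃ F ∈ elementaryMatrices ι R,
      (E * N * F) z z = N z z ∧ (∀ j ≠ z, (E * N * F) z j = 0) ∧
        ∀ i ≠ z, (E * N * F) i z = 0 := by
  obtain ⟨u, hu⟩ := hN
  obtain ⟨F, hF, hFcol, hFrow⟩ :=
    exists_mem_elementaryMatrices_mul_apply_row_eq_zero z N u hu.symm
  obtain ⟨E, hE, hErow, hEcol⟩ :=
    exists_mem_elementaryMatrices_mul_apply_col_eq_zero z (N * F) u ((hFcol z).trans hu.symm)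
  refine ⟨E, hE, F, hF, ?_, fun j hj => ?_, fun i hi => ?_⟩ <;> rw [mul_assoc]
  · rw [hErow, hFcol]
  · rw [hErow, hFrow j hj]
  · exact hEcol i hi

lemma exists_mem_elementaryMatrices_mul_apply_eq_one_sub (z : ι) {M B : Matrix ι ι R}
    (hMB : M * B = 1) :
    ∃ F ∈ elementaryMatrices ι R, (M * F) z z = 1 - M z z * (B z z * (1 - M z z)) := by
  refine ⟨_, one_add_sum_single_col_mem_elementaryMatrices (Finset.notMem_erase z .univ)
    (fun k => B k z * (1 - M z z)), ?_⟩
  have hrow : M z z * B z z + ∑ k ∈ Finset.univ.erase z, M z k * B k z = 1 := by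
    rw [Finset.add_sum_erase (f := fun k => M z k * B k z) _ (Finset.mem_univ z), ← mul_apply,
      hMB, one_apply_eq]
  simp only [mul_one_add_sum_single_apply_self, ← mul_assoc, ← Finset.sum_mul,
    eq_sub_of_add_eq' hrow]
  noncomm_ring

lemma exists_mem_elementaryMatrices_isolate_of_isIdempotentElem_apply {z w : ι} (hzw : z ≠ w)
    {M B : Matrix ι ι R} (hMB : M * B = 1) (he : IsIdempotentElem (M z z)) :
    ∃ E ∈ elementaryMatrices ι R, ∃ F ∈ elementaryMatrices ι R,
      (E * M * F) z z = 1 ∧ (∀ j ≠ z, (E * M * F) z j = 0) ∧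
        ∀ i ≠ z, (E * M * F) i z = 0 := by
  obtain ⟨F₁, hF₁, hMF₁⟩ := exists_mem_elementaryMatrices_mul_apply_eq_one_sub z hMB
  set e := M z z
  set b := B z z * (1 - e)
  have hbe : b * e = 0 := by rw [mul_assoc, sub_mul, one_mul, he.eq, sub_self, mul_zero]
  have hx : e * b * (e * b) = 0 := by rw [mul_assoc, ← mul_assoc b, hbe, zero_mul, mul_zero]
  have hN : ((1 + single z z (e * b)) * M * F₁) z z = 1 := by
    rw [mul_assoc, one_add_single_mul_apply_same, hMF₁,
      show (1 + e * b) * (1 - e * b) = 1 - e * b * (e * b) by noncomm_ring, hx, sub_zero]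
  obtain ⟨E, hE, F, hF, hNzz, hrow, hcol⟩ :=
    exists_mem_elementaryMatrices_isolate_of_isUnit z _ (hN ▸ isUnit_one)
  refine ⟨_, mul_mem hE (one_add_single_mul_mem_elementaryMatrices hzw hbe), _,
    mul_mem hF₁ hF, ?_⟩
  simp only [mul_assoc] at hNzz hrow hcol ⊢
  exact ⟨hNzz.trans (by rwa [mul_assoc] at hN), hrow, hcol⟩

lemma apply_eq_one_of_isIdempotentElem_of_subsingleton [Subsingleton ι] (z : ι)
    {M B : Matrix ι ι R} (hMB : M * B = 1) (he : IsIdempotentElem (M z z)) : M z z = 1 := by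
  have hunit : M z z * B z z = 1 := by
    rw [← Fintype.sum_subsingleton (fun k => M z k * B k z) z, ← mul_apply, hMB, one_apply_eq]
  calc M z z = M z z * (M z z * B z z) := by rw [hunit, mul_one]
    _ = 1 := by rw [← mul_assoc, he.eq, hunit]

theorem exists_mem_elementaryMatrices_isolate_of_isIdempotentElem (z : ι) {M : Matrix ι ι R}
    (hM : IsUnit M) (hidem : ∃ i j, IsIdempotentElem (M i j)) :
    ∃ E ∈ elementaryMatrices ι R, ∃ F ∈ elementaryMatrices ι R,
      (E * M * F) z z = 1 ∧ (∀ j ≠ z, (E * M * F) z j = 0) ∧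
        ∀ i ≠ z, (E * M * F) i z = 0 := by
  obtain ⟨i, j, he⟩ := hidem
  obtain ⟨P, hP, hPM⟩ := exists_mem_elementaryMatrices_mul_apply_row (R := R) z i
  obtain ⟨Q, hQ, hMQ⟩ := exists_mem_elementaryMatrices_mul_apply_col (R := R) j z
  obtain ⟨B, hB⟩ := (((isUnit_of_mem_elementaryMatrices hP).mul hM).mul
    (isUnit_of_mem_elementaryMatrices hQ)).exists_right_inv
  replace he : IsIdempotentElem ((P * M * Q) z z) := by rwa [hMQ, hPM]
  obtain ⟨E, hE, F, hF, hEF⟩ :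
      ∃ E ∈ elementaryMatrices ι R, ∃ F ∈ elementaryMatrices ι R,
      (E * (P * M * Q) * F) z z = 1 ∧ (∀ j ≠ z, (E * (P * M * Q) * F) z j = 0) ∧
        ∀ i ≠ z, (E * (P * M * Q) * F) i z = 0 := by
    rcases subsingleton_or_nontrivial ι with _ | _
    · refine ⟨1, one_mem _, 1, one_mem _, ?_, fun j hj => ?_, fun i hi => ?_⟩
      · simpa using apply_eq_one_of_isIdempotentElem_of_subsingleton z hB he
      · exact absurd (Subsingleton.elim j z) hj
      · exact absurd (Subsingleton.elim i z) hi
    · obtain ⟨w, hw⟩ := exists_ne z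
      exact exists_mem_elementaryMatrices_isolate_of_isIdempotentElem_apply hw.symm hB he
  refine ⟨E * P, mul_mem hE hP, Q * F, mul_mem hQ hF, ?_⟩
  simpa only [mul_assoc] using hEF

theorem stmt2 (R : Type u) [Ring R] (n : ℕ) (hn : 0 < n)
    (A : (Matrix (Fin n) (Fin n) R)ˣ) (hA : ∃ i j, IsIdempotentElem (A.val i j)) :
    ∃ E F : (Matrix (Fin n) (Fin n) R)ˣ,
      E ∈ ElementarySubgroup (Fin n) R ∧ F ∈ ElementarySubgroup (Fin n) R ∧
      (E.val * A.val * F.val) ⟨0, hn⟩ ⟨0, hn⟩ = 1 ∧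
      (∀ j : Fin n, j ≠ ⟨0, hn⟩ → (E.val * A.val * F.val) ⟨0, hn⟩ j = 0) ∧
      (∀ i : Fin n, i ≠ ⟨0, hn⟩ → (E.val * A.val * F.val) i ⟨0, hn⟩ = 0) := by
  obtain ⟨_, ⟨E, hE, rfl⟩, _, ⟨F, hF, rfl⟩, hEAF⟩ :=
    exists_mem_elementaryMatrices_isolate_of_isIdempotentElem ⟨0, hn⟩ A.isUnit hA
  exact ⟨E, F, hE, hF, hEAF⟩
end

section
/- Let R be an exchange ring and let α = (a_1, a_2, …, a_n) be a right unimodular row over R. Then there exists a matrix E ∈ E_n(R) such that the row (b_1, b_2, …, b_n) = αE satisfies: R = b_1R ⊕ ⋯ ⊕ b_nR (an internal direct sum of right ideals) and b_i ∈ a_iRa_i for all i. -/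
/-!
By Nicholson's theorem, in an exchange ring every decomposition `1 = ∑ cᵢ` refines to a complete
family of orthogonal idempotents `eᵢ ∈ cᵢR`. It is proved one summand at a time inside corners
`fRf`: the exchange property applied to `c₀` splits off an idempotent `g ∈ c₀R` with
`f - g ∈ (f - c₀)R`, the other summands are compressed into the corner of `f - g`, and the
idempotents `pᵢ` found there are pulled back to idempotents `yᵢ ∈ cᵢR`, at the cost of replacing
`g` by `g (1 - ∑ yᵢ)`.

For `cᵢ = aᵢrᵢ` this gives `eᵢ = aᵢtᵢ`. Replacing one column `aₖ` at a time by
`eₖaₖ = aₖ - ∑_{j ≠ k} vⱼ (tⱼaₖ)` is a product of transvections, since every current column `vⱼ`,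
whether `aⱼ` or `eⱼaⱼ`, satisfies `vⱼtⱼ = eⱼ`. Finally `eᵢaᵢR = eᵢR`, and the right ideals `eᵢR`
of a complete family of orthogonal idempotents form a direct sum decomposition of `R`.
-/

universe u

section Idempotents

variable {R : Type*} [Ring R] {ι : Type*} [Fintype ι]

theorem OrthogonalIdempotents.mul_of_sum_mul_eq {p x : ι → R} (hp : OrthogonalIdempotents p)
    (hx : ∀ i, (∑ j, p j) * x i = p i) : OrthogonalIdempotents (fun i => x i * p i) := by
  have key : ∀ i j, p i * (x j * p j) = p i * p j := fun i j =>
    calc p i * (x j * p j) = (p i * ∑ k, p k) * x j * p j := by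
          rw [hp.mul_sum_of_mem (Finset.mem_univ i), mul_assoc]
      _ = p i * (p j * p j) := by rw [mul_assoc (p i), hx, mul_assoc]
      _ = p i * p j := by rw [(hp.idem j).eq]
  refine ⟨fun i => ?_, fun i j hij => ?_⟩
  · rw [IsIdempotentElem, mul_assoc, key, (hp.idem i).eq]
  · simp only [mul_assoc, key, hp.ortho hij, mul_zero]

theorem OrthogonalIdempotents.option_mul_one_sub {y : ι → R} (hy : OrthogonalIdempotents y)
    {g : R} (hg : IsIdempotentElem g) (hyg : (∑ i, y i) * g = 0) :
    OrthogonalIdempotents (Option.elim · (g * (1 - ∑ i, y i)) y) := by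
  have hY : IsIdempotentElem (∑ i, y i) := hy.isIdempotentElem_sum
  refine hy.option _ ?_ ?_ ?_
  · calc g * (1 - ∑ i, y i) * (g * (1 - ∑ i, y i))
        = g * ((g - (∑ i, y i) * g) * (1 - ∑ i, y i)) := by noncomm_ring
      _ = g * (1 - ∑ i, y i) := by rw [hyg, sub_zero, ← mul_assoc, hg.eq]
  · rw [mul_assoc, sub_mul, one_mul, hY.eq, sub_self, mul_zero]
  · rw [← mul_assoc, hyg, zero_mul]

theorem OrthogonalIdempotents.option_lift {p x : ι → R} (hp : OrthogonalIdempotents p) {g : R}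
    (hg : IsIdempotentElem g) (hpg : (∑ i, p i) * g = 0) (hx : ∀ i, (∑ j, p j) * x i = p i)
    (hgx : ∀ i, (g + ∑ j, p j) * x i = x i) :
    OrthogonalIdempotents (Option.elim · (g * (1 - ∑ i, x i * p i)) fun i => x i * p i) ∧
      g * (1 - ∑ i, x i * p i) + ∑ i, x i * p i = g + ∑ i, p i := by
  have hyg : (∑ i, x i * p i) * g = 0 := by
    rw [Finset.sum_mul]
    refine Finset.sum_eq_zero fun i _ => ?_
    rw [mul_assoc, ← hp.mul_sum_of_mem (Finset.mem_univ i), mul_assoc, hpg, mul_zero, mul_zero]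
  have hY : ∑ i, x i * p i = g * ∑ i, x i * p i + ∑ i, p i := by
    rw [Finset.mul_sum, ← Finset.sum_add_distrib]
    refine Finset.sum_congr rfl fun i _ => ?_
    calc x i * p i = g * (x i * p i) + (∑ j, p j) * x i * p i := by
          nth_rewrite 1 [← hgx i]; noncomm_ring
      _ = g * (x i * p i) + p i := by rw [hx, (hp.idem i).eq]
  refine ⟨(hp.mul_of_sum_mul_eq hx).option_mul_one_sub hg hyg, ?_⟩
  rw [mul_sub, mul_one]
  nth_rewrite 2 [hY]
  abel

end Idempotents

namespace IsExchangeRing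

variable {R : Type*} [Ring R]

/-- The exchange property of the corner ring `fRf`, inherited from that of `R`. -/
theorem exists_split_of_corner (hR : IsExchangeRing R) {f c : R} (hf : IsIdempotentElem f)
    (hfc : f * c = c) :
    ∃ g t : R, IsIdempotentElem g ∧ c ∣ g ∧ f * g = g ∧ g * f = g ∧ (f - c) * t = f - g := by
  obtain ⟨ε, r, s, hε, hεr, hεs⟩ := hR c
  have hfε : f * ε = ε := by rw [hεr, ← mul_assoc, hfc]
  refine ⟨ε * f, s * f, ?_, ⟨r * f, by rw [hεr, mul_assoc]⟩, by rw [← mul_assoc, hfε],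
    by rw [mul_assoc, hf.eq], ?_⟩
  · rw [IsIdempotentElem, mul_assoc, ← mul_assoc f, hfε, ← mul_assoc, hε.eq]
  · calc (f - c) * (s * f) = f * ((1 - c) * s) * f := by
          rw [← mul_assoc f, mul_sub, mul_one, hfc, mul_assoc]
      _ = f - ε * f := by rw [← hεs, mul_sub, mul_one, hfε, sub_mul, hf.eq]

theorem exists_orthogonalIdempotents_dvd_of_sum_eq (hR : IsExchangeRing R) {ι : Type*}
    [Fintype ι] {f : R} (hf : IsIdempotentElem f) (c : ι → R) (hfc : ∀ i, f * c i = c i)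
    (hc : ∑ i, c i = f) :
    ∃ e : ι → R, OrthogonalIdempotents e ∧ (∀ i, c i ∣ e i) ∧ ∑ i, e i = f := by
  revert f c
  refine Fintype.induction_empty_option (P := fun ι _ => ∀ {f : R}, IsIdempotentElem f →
    ∀ c : ι → R, (∀ i, f * c i = c i) → ∑ i, c i = f →
      ∃ e : ι → R, OrthogonalIdempotents e ∧ (∀ i, c i ∣ e i) ∧ ∑ i, e i = f) ?_ ?_ ?_ ι
  · intro α β _ σ ih f hf c hfc hc
    let _ := Fintype.ofEquiv β σ.symm
    obtain ⟨e, he, hce, hesum⟩ := ih hf (c ∘ σ) (fun i => hfc (σ i))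
      ((σ.sum_comp c).trans hc)
    refine ⟨e ∘ σ.symm, (OrthogonalIdempotents.equiv σ.symm).mpr he, fun i => ?_,
      (σ.symm.sum_comp e).trans hesum⟩
    simpa using hce (σ.symm i)
  · intro f _ c _ hc
    exact ⟨fun i => i.elim, ⟨fun i => i.elim, fun i => i.elim⟩, fun i => i.elim, by simpa using hc⟩
  · intro α _ ih f hf c hfc hc
    obtain ⟨g, t, hg, hcg, hfg, hgf, ht⟩ := hR.exists_split_of_corner hf (hfc none)
    set f' := f - g with hf'
    have hf'idem : IsIdempotentElem f' := hg.sub hf hgf hfg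
    have hf'g : f' * g = 0 := by rw [sub_mul, hfg, hg.eq, sub_self]
    have hc' : ∑ i, f' * (c (some i) * t * f') = f' := by
      rw [Fintype.sum_option] at hc
      rw [← Finset.mul_sum, ← Finset.sum_mul, ← Finset.sum_mul, eq_sub_of_add_eq' hc, ht,
        hf'idem.eq, hf'idem.eq]
    obtain ⟨p, hp, hcp, hpsum⟩ :=
      ih hf'idem _ (fun i => by rw [← mul_assoc, hf'idem.eq]) hc'
    choose w hw using hcp
    set x : α → R := fun i => c (some i) * t * f' * w i
    have hx : ∀ i, (∑ j, p j) * x i = p i := fun i => by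
      rw [hpsum, hw]; simp only [x, mul_assoc]
    have hfx : ∀ i, f * x i = x i := fun i => by simp only [x, ← mul_assoc, hfc]
    obtain ⟨hortho, hsum⟩ := hp.option_lift hg (by rw [hpsum, hf'g]) hx
      (fun i => by rw [hpsum, hf', add_sub_cancel, hfx])
    refine ⟨_, hortho, fun i => ?_,
      (Fintype.sum_option _).trans (hsum.trans (by rw [hpsum, hf', add_sub_cancel]))⟩
    cases i with
    | none => exact dvd_mul_of_dvd_left hcg _
    | some i => exact ⟨t * f' * w i * p i, show x i * p i = _ by simp only [x, mul_assoc]⟩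

theorem exists_completeOrthogonalIdempotents_dvd (hR : IsExchangeRing R) {ι : Type*}
    [Fintype ι] (c : ι → R) (hc : ∑ i, c i = 1) :
    ∃ e : ι → R, CompleteOrthogonalIdempotents e ∧ ∀ i, c i ∣ e i := by
  obtain ⟨e, he, hce, hesum⟩ := hR.exists_orthogonalIdempotents_dvd_of_sum_eq
    IsIdempotentElem.one c (fun i => one_mul _) hc
  exact ⟨e, ⟨he, hesum⟩, hce⟩

end IsExchangeRing

section ElementaryColumnOperations

open Matrix

variable {ι R : Type*} [Fintype ι] [DecidableEq ι] [Ring R]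

def ElementaryColumnReach (a b : ι → R) : Prop :=
  ∃ E ∈ ElementarySubgroup ι R, a ᵥ* E.val = b

theorem ElementaryColumnReach.refl (a : ι → R) : ElementaryColumnReach a a :=
  ⟨1, one_mem _, vecMul_one a⟩

theorem ElementaryColumnReach.trans {a b c : ι → R} (hab : ElementaryColumnReach a b)
    (hbc : ElementaryColumnReach b c) : ElementaryColumnReach a c := by
  obtain ⟨E, hE, rfl⟩ := hab
  obtain ⟨F, hF, rfl⟩ := hbc
  exact ⟨E * F, mul_mem hE hF, by rw [Units.val_mul, vecMul_vecMul]⟩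

theorem one_add_single_mul_one_add_single {i j : ι} (hij : i ≠ j) (r s : R) :
    (1 + single i j r) * (1 + single i j s) = 1 + single i j (r + s) := by
  simp [mul_add, add_mul, hij.symm, single_add, add_assoc]

def transvectionUnit {i j : ι} (hij : i ≠ j) (r : R) : (Matrix ι ι R)ˣ where
  val := 1 + single i j r
  inv := 1 + single i j (-r)
  val_inv := by rw [one_add_single_mul_one_add_single hij, add_neg_cancel, single_zero, add_zero]
  inv_val := by rw [one_add_single_mul_one_add_single hij, neg_add_cancel, single_zero, add_zero]

theorem vecMul_one_add_single (v : ι → R) (i j : ι) (r : R) :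
    v ᵥ* (1 + single i j r) = Function.update v j (v j + v i * r) := by
  funext k
  rw [vecMul_add, vecMul_one]
  by_cases hk : k = j
  · subst hk
    simp [vecMul, dotProduct, single]
  · simp [vecMul, dotProduct, single, hk, Ne.symm hk]

theorem elementaryColumnReach_update_add (v : ι → R) {i j : ι} (hij : i ≠ j) (r : R) :
    ElementaryColumnReach v (Function.update v j (v j + v i * r)) :=
  ⟨transvectionUnit hij r, Subgroup.subset_closure ⟨i, j, r, hij, rfl⟩,
    vecMul_one_add_single v i j r⟩

theorem elementaryColumnReach_update_add_sum (v : ι → R) (k : ι) (r : ι → R) {s : Finset ι}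
    (hk : k ∉ s) :
    ElementaryColumnReach v (Function.update v k (v k + ∑ j ∈ s, v j * r j)) := by
  induction s using Finset.induction_on with
  | empty => simpa using ElementaryColumnReach.refl v
  | insert j s hjs ih =>
    have hkj : k ≠ j := fun h => hk (h ▸ Finset.mem_insert_self j s)
    refine (ih fun h => hk (Finset.mem_insert_of_mem h)).trans ?_
    convert elementaryColumnReach_update_add _ (Ne.symm hkj) (r j) using 1
    rw [Function.update_idem, Function.update_self, Function.update_of_ne hkj.symm,
      Finset.sum_insert hjs, add_assoc, add_comm (v j * r j)]

theorem elementaryColumnReach_update_mul {e v t : ι → R} (he : ∑ j, e j = 1)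
    (hv : ∀ j, v j * t j = e j) (k : ι) :
    ElementaryColumnReach v (Function.update v k (e k * v k)) := by
  convert elementaryColumnReach_update_add_sum v k (fun j => -(t j * v k))
    (Finset.notMem_erase k Finset.univ) using 2
  simp only [mul_neg, ← mul_assoc, hv, Finset.sum_neg_distrib, ← Finset.sum_mul,
    Finset.sum_erase_eq_sub (Finset.mem_univ k), he]
  noncomm_ring

theorem elementaryColumnReach_idempotent_mul {e a t : ι → R}
    (he : CompleteOrthogonalIdempotents e) (ht : ∀ i, a i * t i = e i) :
    ElementaryColumnReach a (fun i => e i * a i) := by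
  have key : ∀ s : Finset ι, ElementaryColumnReach a (s.piecewise (fun i => e i * a i) a) := by
    intro s
    induction s using Finset.induction_on with
    | empty => simpa using ElementaryColumnReach.refl a
    | insert k s hks ih =>
      have hv : ∀ j, s.piecewise (fun i => e i * a i) a j * t j = e j := fun j => by
        by_cases hj : j ∈ s
        · rw [Finset.piecewise_eq_of_mem _ _ _ hj, mul_assoc, ht, (he.idem j).eq]
        · rw [Finset.piecewise_eq_of_notMem _ _ _ hj, ht]
      have := ih.trans (elementaryColumnReach_update_mul he.complete hv k)
      rwa [Finset.piecewise_eq_of_notMem _ _ _ hks, ← Finset.piecewise_insert] at this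
  simpa using key Finset.univ

end ElementaryColumnOperations

section RightIdeals

open MulOpposite

variable {R : Type*} [Ring R]

theorem mem_span_singleton_op_iff_dvd {x y : R} : x ∈ Submodule.span Rᵐᵒᵖ {y} ↔ y ∣ x := by
  rw [Submodule.mem_span_singleton]
  constructor
  · rintro ⟨r, rfl⟩
    exact ⟨r.unop, rfl⟩
  · rintro ⟨r, rfl⟩
    exact ⟨op r, rfl⟩

theorem span_singleton_op_eq_of_dvd_of_dvd {x y : R} (hxy : x ∣ y) (hyx : y ∣ x) :
    Submodule.span Rᵐᵒᵖ {x} = Submodule.span Rᵐᵒᵖ {y} :=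
  le_antisymm
    ((Submodule.span_singleton_le_iff_mem _ _).mpr (mem_span_singleton_op_iff_dvd.mpr hyx))
    ((Submodule.span_singleton_le_iff_mem _ _).mpr (mem_span_singleton_op_iff_dvd.mpr hxy))

variable {ι : Type*} {e : ι → R}

theorem OrthogonalIdempotents.iSupIndep_span_op (he : OrthogonalIdempotents e) :
    iSupIndep fun i => Submodule.span Rᵐᵒᵖ {e i} := by
  intro i
  rw [Submodule.disjoint_def]
  intro y hyi hy
  have hker : (⨆ (j) (_ : j ≠ i), Submodule.span Rᵐᵒᵖ {e j}) ≤
      LinearMap.ker (DistribSMul.toLinearMap Rᵐᵒᵖ R (e i)) :=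
    iSup₂_le fun j hj => (Submodule.span_singleton_le_iff_mem _ _).mpr (he.ortho hj.symm)
  obtain ⟨r, rfl⟩ := mem_span_singleton_op_iff_dvd.mp hyi
  calc e i * r = e i * (e i * r) := by rw [← mul_assoc, (he.idem i).eq]
    _ = 0 := hker hy

theorem CompleteOrthogonalIdempotents.iSup_span_op_eq_top [Fintype ι]
    (he : CompleteOrthogonalIdempotents e) :
    ⨆ i, Submodule.span Rᵐᵒᵖ {e i} = ⊤ := by
  refine Submodule.eq_top_iff'.mpr fun y => ?_
  rw [← one_mul y, ← he.complete, Finset.sum_mul]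
  exact Submodule.sum_mem _ fun i _ => Submodule.mem_iSup_of_mem i
    (mem_span_singleton_op_iff_dvd.mpr (dvd_mul_right _ _))

end RightIdeals

/-- The internal direct sum `R = b₁R ⊕ ⋯ ⊕ bₙR` of right ideals is expressed by independence plus
supremum `⊤` of the right ideals `bᵢR = Submodule.span Rᵐᵒᵖ {bᵢ}`. -/
theorem stmt3 (R : Type u) [Ring R] (hR : IsExchangeRing R) (n : ℕ)
    (a : Fin n → R) (ha : ∃ r : Fin n → R, ∑ i, a i * r i = 1) :
    ∃ E ∈ ElementarySubgroup (Fin n) R, ∃ b : Fin n → R,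
      b = Matrix.vecMul a E.val ∧
      (∀ i, ∃ r : R, b i = a i * r * a i) ∧
      iSupIndep (fun i => Submodule.span Rᵐᵒᵖ ({b i} : Set R)) ∧
      (⨆ i, Submodule.span Rᵐᵒᵖ ({b i} : Set R)) = ⊤ := by
  obtain ⟨r, hr⟩ := ha
  obtain ⟨e, he, hdvd⟩ := hR.exists_completeOrthogonalIdempotents_dvd _ hr
  choose t ht using fun i => (dvd_mul_right (a i) (r i)).trans (hdvd i)
  obtain ⟨E, hE, hEa⟩ := elementaryColumnReach_idempotent_mul he fun i => (ht i).symm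
  have hspan : ∀ i, Submodule.span Rᵐᵒᵖ {e i * a i} = Submodule.span Rᵐᵒᵖ {e i} := fun i =>
    span_singleton_op_eq_of_dvd_of_dvd ⟨t i, by rw [mul_assoc, ← ht, (he.idem i).eq]⟩
      (dvd_mul_right _ _)
  refine ⟨E, hE, _, hEa.symm, fun i => ⟨t i, by rw [← ht]⟩, ?_, ?_⟩
  · simpa only [hspan] using he.iSupIndep_span_op
  · simpa only [hspan] using he.iSup_span_op_eq_top
end

section
/- Let R be an exchange ring and let α = (a_1, a_2, …, a_n) be a right unimodular row over R, with n ≥ 2. Then there exists a matrix E ∈ E_n(R) such that the row (b_1, b_2, …, b_n) = αE satisfies Rb_1R = R and b_i ∈ a_iRa_i for all i ≥ 2. -/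
/-!
By Nicholson's theorem, in an exchange ring a unimodular row `∑ aᵢ rᵢ = 1` can be refined to
idempotents `eᵢ = aᵢ tᵢ` with `∑ eᵢ = 1`; the induction on the number of entries passes to the
corner ring `ηRη` of an idempotent `η` produced by the exchange property.

Given the `eᵢ`, every intermediate row `b` satisfies `bⱼ tⱼ = eⱼ`, so adding `∑_{j ≠ i} bⱼ tⱼ x`
to column `i` adds `(1 - eᵢ) x`. With `x = -aᵢ` this turns `aᵢ` into `eᵢ aᵢ = aᵢ tᵢ aᵢ`; doing
so for every `i ≠ 0` and finally adding `(1 - e₀)(1 - a₀)` to the first entry gives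
`b₀ = a₀ + (1 - e₀)(1 - a₀)`, and `1 = e₀ b₀ t₀ + (1 - e₀) b₀`.
-/

universe u

open Finset Matrix

variable {R : Type*} [Ring R]

theorem IsIdempotentElem.mul_left_of_mul_eq {g η x : R} (hg : IsIdempotentElem g)
    (hgη : g * η = g) (hx : η * x = g) :
    IsIdempotentElem (x * g) ∧ η * (x * g) = g ∧ x * g * η = x * g := by
  have hgx : g * x = g := by nth_rw 1 [← hgη]; rw [mul_assoc, hx, hg.eq]
  refine ⟨?_, by rw [← mul_assoc, hx, hg.eq], by rw [mul_assoc, hgη]⟩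
  show x * g * (x * g) = x * g
  rw [mul_assoc, ← mul_assoc g, hgx, hg.eq]

theorem exists_isIdempotentElem_lift {ι : Type*} (s : Finset ι) {η : R} (a t : ι → R)
    (hidem : ∀ i ∈ s, IsIdempotentElem (η * a i * t i))
    (hη : ∀ i ∈ s, η * a i * t i * η = η * a i * t i) (hsum : ∑ i ∈ s, η * a i * t i = η) :
    ∃ u : ι → R, (∀ i ∈ s, IsIdempotentElem (a i * u i)) ∧
      (∀ i ∈ s, a i * u i * η = a i * u i) ∧ η * ∑ i ∈ s, a i * u i = η := by
  have hlift (i : ι) (hi : i ∈ s) :=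
    (hidem i hi).mul_left_of_mul_eq (hη i hi) (x := a i * t i) (mul_assoc ..).symm
  refine ⟨fun i => t i * (η * a i * t i), fun i hi => ?_, fun i hi => ?_, ?_⟩
  · simpa only [mul_assoc] using (hlift i hi).1
  · simpa only [mul_assoc] using (hlift i hi).2.2
  · conv_rhs => rw [← hsum]
    rw [mul_sum]
    exact sum_congr rfl fun i hi => by simpa only [mul_assoc] using (hlift i hi).2.1

namespace IsExchangeRing

theorem exists_isIdempotentElem_corner_s4 (hR : IsExchangeRing R) {f x : R}
    (hf : IsIdempotentElem f) (hfx : f * x = x) :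
    ∃ η p q : R, IsIdempotentElem η ∧ f * η = η ∧ η * f = η ∧
      f - η = x * p ∧ η = (f - x) * q := by
  -- `1 - (x + 1 - f) = f - x`, and `(1 - e) f` is the idempotent of the corner `fRf`
  obtain ⟨e, u, v, he, heu, hev⟩ := hR (x + 1 - f)
  rw [show (1 : R) - (x + 1 - f) = f - x by abel] at hev
  have hfe : f * (1 - e) = 1 - e := by rw [hev, ← mul_assoc, mul_sub, hf.eq, hfx]
  have hfe' : f * e = x * u := by
    rw [heu, ← mul_assoc, mul_sub, mul_add, hfx, mul_one, hf.eq, add_sub_cancel_right]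
  refine ⟨(1 - e) * f, u * f, v * f, ?_, by rw [← mul_assoc, hfe], by rw [mul_assoc, hf.eq],
    ?_, by rw [hev, mul_assoc]⟩
  · show (1 - e) * f * ((1 - e) * f) = (1 - e) * f
    rw [mul_assoc, ← mul_assoc f, hfe, ← mul_assoc, he.one_sub.eq]
  · calc f - (1 - e) * f = (f - f * (1 - e)) * f := by rw [sub_mul f, hf.eq, hfe]
      _ = x * (u * f) := by rw [mul_sub, mul_one, sub_sub_cancel, hfe', mul_assoc]

theorem exists_isIdempotentElem_sum_eq {ι : Type*} [DecidableEq ι] (hR : IsExchangeRing R)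
    (s : Finset ι) {f : R} (hf : IsIdempotentElem f) (a r : ι → R) (ha : ∀ i, f * a i = a i)
    (hsum : ∑ i ∈ s, a i * r i = f) :
    ∃ t : ι → R, (∀ i ∈ s, IsIdempotentElem (a i * t i)) ∧
      (∀ i ∈ s, a i * t i * f = a i * t i) ∧ ∑ i ∈ s, a i * t i = f := by
  induction s using Finset.induction_on generalizing f a r with
  | empty => exact ⟨0, by simp, by simp, by simpa using hsum⟩
  | @insert j s hj ih =>
    set x := a j * (r j * f)
    have hrest : f - x = ∑ i ∈ s, a i * (r i * f) := by
      have := congrArg (· * f) hsum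
      simp only [sum_insert hj, add_mul, sum_mul, mul_assoc, hf.eq] at this
      exact (eq_sub_of_add_eq' this).symm
    obtain ⟨η, p, q, hη, hfη, hηf, hfη_sub, hη_eq⟩ :=
      hR.exists_isIdempotentElem_corner_s4 hf (x := x) (by rw [← mul_assoc, ha])
    have hηsum : ∑ i ∈ s, η * a i * (r i * f * q * η) = η := by
      calc ∑ i ∈ s, η * a i * (r i * f * q * η) = η * ((f - x) * q) * η := by
            rw [hrest, sum_mul, mul_sum, sum_mul]
            exact sum_congr rfl fun i _ => by noncomm_ring
        _ = η := by rw [← hη_eq, hη.eq, hη.eq]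
    obtain ⟨t', hidem', hη', hsum'⟩ := ih hη (fun i => η * a i) (fun i => r i * f * q * η)
      (fun i => by simp only [← mul_assoc, hη.eq]) hηsum
    obtain ⟨u, hu, huη, hηS⟩ := exists_isIdempotentElem_lift s a t' hidem' hη' hsum'
    set S := ∑ i ∈ s, a i * u i
    have hSη : S * η = S := by rw [sum_mul]; exact sum_congr rfl huη
    have hS : IsIdempotentElem S := by
      show S * S = S
      nth_rw 1 [← hSη]; rw [mul_assoc, hηS, hSη]
    have hSf : S * f = S := by nth_rw 1 [← hSη]; rw [mul_assoc, hηf, hSη]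
    have hfS : f * S = S := by
      rw [mul_sum]; exact sum_congr rfl fun i _ => by rw [← mul_assoc, ha]
    have hfS_sub : (f - η) * (1 + η - S) = f - S := by
      simp only [sub_mul, mul_sub, mul_add, mul_one, hfη, hfS, hη.eq, hηS]; abel
    set t := Function.update u j (r j * f * p * (1 + η - S))
    have hatj : a j * t j = f - S := by
      rw [show t j = _ from Function.update_self .., ← hfS_sub, hfη_sub]
      simp only [x, mul_assoc]
    have hat (i : ι) (hi : i ∈ s) : a i * t i = a i * u i := by
      rw [show t i = _ from Function.update_of_ne (ne_of_mem_of_not_mem hi hj) ..]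
    refine ⟨t, ?_, ?_, ?_⟩
    · rw [forall_mem_insert, hatj]
      exact ⟨hS.sub hf hSf hfS, fun i hi => hat i hi ▸ hu i hi⟩
    · rw [forall_mem_insert, hatj, sub_mul, hf.eq, hSf]
      refine ⟨rfl, fun i hi => ?_⟩
      rw [hat i hi, ← huη i hi, mul_assoc, hηf]
    · rw [sum_insert hj, hatj, sum_congr rfl hat, sub_add_cancel]

end IsExchangeRing

theorem TwoSidedIdeal.span_singleton_add_one_sub_mul_eq_top {a t : R}
    (he : IsIdempotentElem (a * t)) :
    TwoSidedIdeal.span {a + (1 - a * t) * (1 - a)} = ⊤ := by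
  set x := a + (1 - a * t) * (1 - a)
  have hx : x ∈ TwoSidedIdeal.span {x} := TwoSidedIdeal.subset_span rfl
  have hleft : a * t * x * t = a * t := by
    calc a * t * x * t = a * t * (a * t) + a * t * (1 - a * t) * ((1 - a) * t) := by
          simp only [x]; noncomm_ring
      _ = a * t := by rw [he.eq, he.mul_one_sub_self, zero_mul, add_zero]
  have hright : (1 - a * t) * x = 1 - a * t := by
    calc (1 - a * t) * x = (1 - a * t) * a + (1 - a * t) * (1 - a * t) * (1 - a) := by
          simp only [x]; noncomm_ring
      _ = 1 - a * t := by rw [he.one_sub.eq]; noncomm_ring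
  have hone : (1 : R) = a * t * x * t + (1 - a * t) * x := by rw [hleft, hright, add_sub_cancel]
  apply TwoSidedIdeal.eq_top
  rw [hone]
  exact (span {x}).add_mem ((span {x}).mul_mem_right _ _ ((span {x}).mul_mem_left _ _ hx))
    ((span {x}).mul_mem_left _ _ hx)

section ElementaryOrbit

variable {ι : Type*} [Fintype ι] [DecidableEq ι]

def elementaryOrbit (a : ι → R) : Set (ι → R) :=
  {b | ∃ E ∈ ElementarySubgroup ι R, b = vecMul a E.val}

theorem Matrix.vecMul_single (b : ι → R) (i j : ι) (c : R) :
    vecMul b (single i j c) = Pi.single j (b i * c) := by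
  ext k
  by_cases h : k = j
  · subst h; simp [vecMul, dotProduct, single_apply]
  · simp [vecMul, dotProduct, h, Ne.symm h]

theorem self_mem_elementaryOrbit (a : ι → R) : a ∈ elementaryOrbit a :=
  ⟨1, one_mem _, by simp⟩

theorem add_single_mem_elementaryOrbit {a b : ι → R} (hb : b ∈ elementaryOrbit a) {i j : ι}
    (hij : i ≠ j) (c : R) : b + Pi.single j (b i * c) ∈ elementaryOrbit a := by
  obtain ⟨E, hE, rfl⟩ := hb
  have hnil : IsNilpotent (single i j c : Matrix ι ι R) := ⟨2, by simp [sq, hij.symm]⟩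
  obtain ⟨T, hT⟩ := hnil.isUnit_one_add
  refine ⟨E * T, mul_mem hE (Subgroup.subset_closure ⟨i, j, c, hij, hT⟩), ?_⟩
  rw [Units.val_mul, hT, ← vecMul_vecMul, vecMul_add, vecMul_one, vecMul_single]

theorem add_single_sum_mem_elementaryOrbit {a b : ι → R} (hb : b ∈ elementaryOrbit a) {j : ι}
    {s : Finset ι} (hj : j ∉ s) (c : ι → R) :
    b + Pi.single j (∑ i ∈ s, b i * c i) ∈ elementaryOrbit a := by
  induction s using Finset.induction_on with
  | empty => simpa using hb
  | @insert k s hk ih =>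
    have hkj : k ≠ j := fun h => hj (h ▸ mem_insert_self k s)
    have h := add_single_mem_elementaryOrbit (ih fun h => hj (mem_insert_of_mem h)) hkj (c k)
    rw [Pi.add_apply, Pi.single_eq_of_ne hkj, add_zero, add_assoc, ← Pi.single_add,
      add_comm (∑ i ∈ s, _)] at h
    rwa [sum_insert hk]

def sandwichRow (a t : ι → R) (S : Finset ι) : ι → R :=
  fun j => if j ∈ S then a j * t j * a j else a j

variable {a t : ι → R}

theorem add_single_one_sub_mul_mem_elementaryOrbit (hsum : ∑ i, a i * t i = 1) {b : ι → R}
    (hb : b ∈ elementaryOrbit a) (hbt : ∀ j, b j * t j = a j * t j) (i : ι) (x : R) :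
    b + Pi.single i ((1 - a i * t i) * x) ∈ elementaryOrbit a := by
  have h := add_single_sum_mem_elementaryOrbit hb (notMem_erase i univ) (fun j => t j * x)
  simp only [← mul_assoc, hbt] at h
  rwa [← sum_mul, sum_erase_eq_sub (mem_univ i), hsum] at h

omit [Fintype ι] in
theorem sandwichRow_mul_eq (hidem : ∀ i, IsIdempotentElem (a i * t i)) (S : Finset ι) (j : ι) :
    sandwichRow a t S j * t j = a j * t j := by
  unfold sandwichRow
  split_ifs
  · rw [mul_assoc, (hidem j).eq]
  · rfl

theorem sandwichRow_mem_elementaryOrbit (hidem : ∀ i, IsIdempotentElem (a i * t i))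
    (hsum : ∑ i, a i * t i = 1) (S : Finset ι) : sandwichRow a t S ∈ elementaryOrbit a := by
  induction S using Finset.induction_on with
  | empty =>
    rw [show sandwichRow a t ∅ = a from funext fun j => if_neg (notMem_empty j)]
    exact self_mem_elementaryOrbit a
  | @insert i S hi ih =>
    convert add_single_one_sub_mul_mem_elementaryOrbit hsum ih (sandwichRow_mul_eq hidem S) i
      (-a i) using 1
    ext k
    by_cases hk : k = i
    · subst hk
      simp only [sandwichRow, mem_insert, hi, or_false, ↓reduceIte, Pi.add_apply,
        Pi.single_eq_same]
      noncomm_ring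
    · simp [sandwichRow, hk]

end ElementaryOrbit

theorem IsExchangeRing.exists_mem_elementaryOrbit {ι : Type*} [Fintype ι] [DecidableEq ι]
    (hR : IsExchangeRing R) (a : ι → R) (ha : ∃ r : ι → R, ∑ i, a i * r i = 1) (i₀ : ι) :
    ∃ b ∈ elementaryOrbit a, TwoSidedIdeal.span {b i₀} = ⊤ ∧
      ∀ i ≠ i₀, ∃ r, b i = a i * r * a i := by
  obtain ⟨r, hr⟩ := ha
  obtain ⟨t, hidem, -, hsum⟩ := hR.exists_isIdempotentElem_sum_eq univ IsIdempotentElem.one a r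
    (fun i => one_mul _) hr
  replace hidem i := hidem i (mem_univ i)
  have hb := sandwichRow_mem_elementaryOrbit hidem hsum (univ.erase i₀)
  refine ⟨_, add_single_one_sub_mul_mem_elementaryOrbit hsum hb (sandwichRow_mul_eq hidem _) i₀
    (1 - a i₀), ?_, fun i hi => ⟨t i, ?_⟩⟩
  · simpa [sandwichRow] using TwoSidedIdeal.span_singleton_add_one_sub_mul_eq_top (hidem i₀)
  · simp [sandwichRow, hi]

/-- The transformed row is `b = α · E`; `Rb₁R = R` is expressed via
`TwoSidedIdeal.span`. -/
theorem stmt4 (R : Type u) [Ring R] (hR : IsExchangeRing R) (n : ℕ) (hn : 2 ≤ n)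
    (a : Fin n → R) (ha : ∃ r : Fin n → R, ∑ i, a i * r i = 1) :
    ∃ E ∈ ElementarySubgroup (Fin n) R, ∃ b : Fin n → R,
      b = Matrix.vecMul a E.val ∧
      TwoSidedIdeal.span ({b ⟨0, by omega⟩} : Set R) = ⊤ ∧
      (∀ i : Fin n, i ≠ ⟨0, by omega⟩ → ∃ r : R, b i = a i * r * a i) := by
  obtain ⟨b, ⟨E, hE, rfl⟩, hspan, hdiag⟩ := hR.exists_mem_elementaryOrbit a ha ⟨0, by omega⟩
  exact ⟨E, hE, _, rfl, hspan, hdiag⟩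
end

section
/- Let F be a field, let R = F[x_1, x_2, x_3, x_4]/(x_1, x_2, x_3, x_4)^2, and let a_1, a_2, a_3, a_4 ∈ R be the images of x_1, x_2, x_3, x_4. Let A be the 2×2 matrix with entries a_1, a_2 (first row) and a_3, a_4 (second row). Then for all E, F' ∈ E_2(R), the four entries of the matrix E·A·F' are F-linearly independent nilpotent elements of R. In particular, no sequence of elementary row and column operations transforms A into a matrix with a zero entry, so A cannot be diagonalized by elementary operations. -/
universe u

/-- `R = F[x₁,x₂,x₃,x₄]/(x₁,x₂,x₃,x₄)²`. -/
abbrev ExRing (F : Type u) [Field F] : Type u :=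
  MvPolynomial (Fin 4) F ⧸
    (Ideal.span (Set.range (MvPolynomial.X : Fin 4 → MvPolynomial (Fin 4) F)) ^ 2)

/-- `aᵢ`, the image of `xᵢ` in `R`. -/
noncomputable def exGen (F : Type u) [Field F] (i : Fin 4) : ExRing F :=
  Ideal.Quotient.mk _ (MvPolynomial.X i)

/-- The matrix `A = [[a₁, a₂], [a₃, a₄]]`. -/
noncomputable def exMat (F : Type u) [Field F] : Matrix (Fin 2) (Fin 2) (ExRing F) :=
  !![exGen F 0, exGen F 1; exGen F 2, exGen F 3]

/-! The constant-coefficient map `ε : R → F` has square-zero kernel `𝔪 = (a₁, a₂, a₃, a₄)`, so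
`r * a = ε r • a` for all `r ∈ R`, `a ∈ 𝔪`. As the entries of `A` lie in `𝔪`, invertible `U`, `V`
act on `A` only through their residue matrices: `(U A V)ᵢⱼ = ∑ ε(Uᵢₖ) ε(Vₗⱼ) • aₖₗ`. The
coefficient matrix of this change of family is `ε(U) ⊗ ε(V)ᵀ`, which is invertible, so the
entries of `U A V` are again linearly independent, hence nonzero; they lie in `𝔪`, so they
square to zero. -/

open Matrix
open scoped Kronecker

theorem linearIndependent_sum_smul_of_isUnit {K M m n : Type*} [Field K] [AddCommGroup M]
    [Module K M] [Fintype m] [Fintype n] [DecidableEq m] [DecidableEq n]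
    {a : m × n → M} (ha : LinearIndependent K a) {P : Matrix m m K} {Q : Matrix n n K}
    (hP : IsUnit P) (hQ : IsUnit Q) :
    LinearIndependent K fun q : m × n => ∑ p : m × n, (P q.1 p.1 * Q p.2 q.2) • a p := by
  have hPQ : IsUnit (P ⊗ₖ Qᵀ) := by
    simp only [isUnit_iff_isUnit_det, det_kronecker, det_transpose] at hP hQ ⊢
    exact (hP.pow _).mul (hQ.pow _)
  have hrows : (fun q : m × n => ∑ p : m × n, (P q.1 p.1 * Q p.2 q.2) • a p) =
      Fintype.linearCombination K a ∘ (P ⊗ₖ Qᵀ).row := by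
    ext q
    simp [Fintype.linearCombination_apply, kroneckerMap_apply]
  rw [hrows]
  exact (linearIndependent_rows_iff_isUnit.mpr hPQ).map' _
    (LinearMap.ker_eq_bot.mpr ha.fintypeLinearCombination_injective)

section SquareZeroAugmentation

variable {F R : Type*} [Field F] [CommRing R] [Algebra F R] {ε : R →ₐ[F] F}

theorem mul_eq_smul_of_augmentation_eq_zero (hε : ∀ x y, ε x = 0 → ε y = 0 → x * y = 0)
    (r : R) {a : R} (ha : ε a = 0) : r * a = ε r • a := by
  have : (r - algebraMap F R (ε r)) * a = 0 := hε _ _ (by simp) ha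
  rw [Algebra.smul_def]
  linear_combination this

variable {m n : Type*} [Fintype m] [Fintype n]

theorem Matrix.mul_mul_apply_eq_sum_smul (hε : ∀ x y, ε x = 0 → ε y = 0 → x * y = 0)
    (U : Matrix m m R) {A : Matrix m n R} (hA : ∀ k l, ε (A k l) = 0) (V : Matrix n n R)
    (i : m) (j : n) :
    (U * A * V) i j = ∑ p : m × n, (ε (U i p.1) * ε (V p.2 j)) • A p.1 p.2 := by
  have hUA (l : n) : (U * A) i l = ∑ k, ε (U i k) • A k l := by
    simp only [mul_apply, mul_eq_smul_of_augmentation_eq_zero hε _ (hA _ _)]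
  have hUA_aug (l : n) : ε ((U * A) i l) = 0 := by simp [hUA, hA]
  rw [mul_apply, Fintype.sum_prod_type, Finset.sum_comm]
  refine Finset.sum_congr rfl fun l _ => ?_
  rw [mul_comm, mul_eq_smul_of_augmentation_eq_zero hε _ (hUA_aug l), hUA, Finset.smul_sum]
  simp only [smul_smul, mul_comm]

theorem Matrix.isNilpotent_mul_mul_apply (hε : ∀ x y, ε x = 0 → ε y = 0 → x * y = 0)
    (U : Matrix m m R) {A : Matrix m n R} (hA : ∀ k l, ε (A k l) = 0) (V : Matrix n n R)
    (i : m) (j : n) : IsNilpotent ((U * A * V) i j) := by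
  have h : ε ((U * A * V) i j) = 0 := by simp [mul_apply, hA]
  exact ⟨2, by rw [sq]; exact hε _ _ h h⟩

variable [DecidableEq m] [DecidableEq n]

theorem Matrix.linearIndependent_mul_mul_entries
    (hε : ∀ x y, ε x = 0 → ε y = 0 → x * y = 0) {U : Matrix m m R} (hU : IsUnit U)
    {A : Matrix m n R} (hA : ∀ k l, ε (A k l) = 0)
    (hA_indep : LinearIndependent F fun p : m × n => A p.1 p.2) {V : Matrix n n R}
    (hV : IsUnit V) :
    LinearIndependent F fun p : m × n => (U * A * V) p.1 p.2 := by
  have hUε : IsUnit (U.map ε) := hU.map ε.mapMatrix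
  have hVε : IsUnit (V.map ε) := hV.map ε.mapMatrix
  simpa only [mul_mul_apply_eq_sum_smul hε U hA V, map_apply] using
    linearIndependent_sum_smul_of_isUnit hA_indep hUε hVε

end SquareZeroAugmentation

namespace MvPolynomial

variable (σ K : Type*) [CommRing K]

noncomputable def constantCoeffQuotSq : MvPolynomial σ K ⧸ idealOfVars σ K ^ 2 →ₐ[K] K :=
  Ideal.Quotient.liftₐ _ (aeval 0) fun p hp => by
    simpa [constantCoeff_eq] using (mem_pow_idealOfVars_iff' 2 p).mp hp 0 (by simp)

variable {σ K}

@[simp]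
theorem constantCoeffQuotSq_mk (p : MvPolynomial σ K) :
    constantCoeffQuotSq σ K (Ideal.Quotient.mk _ p) = constantCoeff p := by
  simp [constantCoeffQuotSq, Ideal.Quotient.liftₐ_apply]

theorem mem_idealOfVars_of_constantCoeff_eq_zero {p : MvPolynomial σ K}
    (hp : constantCoeff p = 0) : p ∈ idealOfVars σ K := by
  rw [← pow_one (idealOfVars σ K), mem_pow_idealOfVars_iff']
  intro d hd
  rw [Nat.lt_one_iff, Finsupp.degree_eq_zero_iff] at hd
  rwa [hd, ← constantCoeff_eq]

theorem mul_eq_zero_of_constantCoeffQuotSq_eq_zero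
    (x y : MvPolynomial σ K ⧸ idealOfVars σ K ^ 2)
    (hx : constantCoeffQuotSq σ K x = 0) (hy : constantCoeffQuotSq σ K y = 0) : x * y = 0 := by
  obtain ⟨p, rfl⟩ := Ideal.Quotient.mk_surjective x
  obtain ⟨q, rfl⟩ := Ideal.Quotient.mk_surjective y
  rw [constantCoeffQuotSq_mk] at hx hy
  rw [← map_mul, Ideal.Quotient.eq_zero_iff_mem, sq]
  exact Ideal.mul_mem_mul (mem_idealOfVars_of_constantCoeff_eq_zero hx)
    (mem_idealOfVars_of_constantCoeff_eq_zero hy)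

theorem linearIndependent_mk_X :
    LinearIndependent K fun i => Ideal.Quotient.mk (idealOfVars σ K ^ 2) (X i) := by
  classical
  refine linearIndependent_iff'.mpr fun s c hc i hi => ?_
  have hmem : ∑ j ∈ s, c j • X j ∈ idealOfVars σ K ^ 2 := by
    rw [← Ideal.Quotient.eq_zero_iff_mem, ← hc, ← Ideal.Quotient.mkₐ_eq_mk K, map_sum]
    simp only [map_smul]
  have := (mem_pow_idealOfVars_iff' 2 _).mp hmem (Finsupp.single i 1) (by simp)
  simpa [coeff_sum, coeff_X, Finsupp.single_left_inj, hi] using this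

end MvPolynomial

section ExMat

variable (F : Type u) [Field F]

open MvPolynomial

theorem exMat_apply (i j : Fin 2) : exMat F i j = exGen F (finProdFinEquiv (i, j)) := by
  fin_cases i <;> fin_cases j <;> rfl

theorem constantCoeffQuotSq_exMat (i j : Fin 2) :
    constantCoeffQuotSq (Fin 4) F (exMat F i j) = 0 := by
  simp [exMat_apply, exGen]

theorem linearIndependent_exMat :
    LinearIndependent F fun p : Fin 2 × Fin 2 => exMat F p.1 p.2 := by
  simp only [exMat_apply]
  exact linearIndependent_mk_X.comp _ finProdFinEquiv.injective

end ExMat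

theorem stmt13 (F : Type u) [Field F] :
    (∀ E F' : (Matrix (Fin 2) (Fin 2) (ExRing F))ˣ,
      E ∈ ElementarySubgroup (Fin 2) (ExRing F) →
      F' ∈ ElementarySubgroup (Fin 2) (ExRing F) →
      LinearIndependent F (fun ij : Fin 2 × Fin 2 => (E.val * exMat F * F'.val) ij.1 ij.2) ∧
      (∀ i j, IsNilpotent ((E.val * exMat F * F'.val) i j)) ∧
      (∀ i j, (E.val * exMat F * F'.val) i j ≠ 0)) ∧
    ¬ ∃ E F' : (Matrix (Fin 2) (Fin 2) (ExRing F))ˣ,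
        E ∈ ElementarySubgroup (Fin 2) (ExRing F) ∧
        F' ∈ ElementarySubgroup (Fin 2) (ExRing F) ∧
        (E.val * exMat F * F'.val).IsDiag := by
  have hli (E F' : (Matrix (Fin 2) (Fin 2) (ExRing F))ˣ) :=
    linearIndependent_mul_mul_entries MvPolynomial.mul_eq_zero_of_constantCoeffQuotSq_eq_zero
      E.isUnit (constantCoeffQuotSq_exMat F) (linearIndependent_exMat F) F'.isUnit
  refine ⟨fun E F' _ _ => ⟨hli E F', ?_, fun i j => (hli E F').ne_zero (i, j)⟩, ?_⟩
  · exact isNilpotent_mul_mul_apply MvPolynomial.mul_eq_zero_of_constantCoeffQuotSq_eq_zero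
      E.val (constantCoeffQuotSq_exMat F) F'.val
  · rintro ⟨E, F', -, -, hdiag⟩
    exact (hli E F').ne_zero (0, 1) (hdiag (by decide))
end

section
/- Let F be a field, let R = F[x_1, x_2, x_3, x_4]/(x_1, x_2, x_3, x_4)^2, and let a_1, a_2, a_3, a_4 ∈ R be the images of x_1, x_2, x_3, x_4. Let A be the 2×2 matrix with entries a_1, a_2 (first row) and a_3, a_4 (second row). Then there do not exist invertible matrices X, Y ∈ GL_2(R) such that XAY is a diagonal matrix. -/
/-!
Send `aᵢ` to `ε Eᵢ` in the square-zero extension `F ⊕ ε M₂(F)`, where `E₁, …, E₄` are the matrix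
units. Since products of two `aᵢ` vanish, the `ε`-part of `(XAY)ᵢₖ` is the rank-one matrix
`(x_{ij} y_{lk})_{j,l}` built from the residues `x, y ∈ GL₂(F)` of `X, Y`. It is nonzero because row
`i` of `x` and column `k` of `y` are nonzero, so no off-diagonal entry of `XAY` can vanish.
-/

universe u

open Matrix TrivSqZeroExt

section FirstOrder

variable {σ R M : Type*} [CommRing R] [AddCommGroup M] [Module R M] [Module Rᵐᵒᵖ M]
  [IsCentralScalar R M]

theorem snd_mul_inr_mul (x y : TrivSqZeroExt R M) (m : M) :
    (x * inr m * y).snd = (x.fst * y.fst) • m := by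
  simp [snd_mul, fst_mul, mul_smul, op_smul_eq_smul, smul_comm x.fst]

theorem span_range_X_sq_le_ker_aeval_inr (v : σ → M) :
    Ideal.span (Set.range (MvPolynomial.X : σ → MvPolynomial σ R)) ^ 2 ≤
      RingHom.ker (MvPolynomial.aeval (fun i => (inr (v i) : TrivSqZeroExt R M))) := by
  rw [sq, Ideal.span_mul_span', Ideal.span_le]
  rintro _ ⟨_, ⟨i, rfl⟩, _, ⟨j, rfl⟩, rfl⟩
  simp

noncomputable def firstOrderHom (v : σ → M) :
    MvPolynomial σ R ⧸ Ideal.span (Set.range (MvPolynomial.X : σ → MvPolynomial σ R)) ^ 2 →+*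
      TrivSqZeroExt R M :=
  Ideal.Quotient.lift _ (MvPolynomial.aeval fun i => inr (v i)).toRingHom
    (fun _ hp => span_range_X_sq_le_ker_aeval_inr v hp)

@[simp]
theorem firstOrderHom_mk_X (v : σ → M) (i : σ) :
    firstOrderHom (R := R) v (Ideal.Quotient.mk _ (MvPolynomial.X i)) = inr (v i) := by
  simp [firstOrderHom]

end FirstOrder

section GenericMatrix

variable (K n : Type*) [CommRing K] [Fintype n] [DecidableEq n]

noncomputable def genericMatrix : Matrix n n (TrivSqZeroExt K (Matrix n n K)) :=
  of fun j l => inr (single j l 1)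

variable {K n}

theorem snd_mul_genericMatrix_mul (X Y : Matrix n n (TrivSqZeroExt K (Matrix n n K))) (i k : n) :
    ((X * genericMatrix K n * Y) i k).snd =
      vecMulVec (fun j => (X i j).fst) (fun l => (Y l k).fst) := by
  simp only [genericMatrix, mul_apply, of_apply, Finset.sum_mul, snd_sum, snd_mul_inr_mul]
  rw [Finset.sum_comm]
  conv_rhs => rw [matrix_eq_sum_single (vecMulVec _ _)]
  simp [vecMulVec_apply, smul_single]

end GenericMatrix

theorem Matrix.det_map_val_ne_zero {R K n : Type*} [CommRing R] [Field K] [Fintype n]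
    [DecidableEq n] (f : R →+* K) (U : (Matrix n n R)ˣ) : (U.val.map f).det ≠ 0 :=
  ((isUnit_iff_isUnit_det _).mp (U.isUnit.map f.mapMatrix)).ne_zero

theorem Matrix.vecMulVec_row_col_ne_zero {K n : Type*} [Field K] [Fintype n] [DecidableEq n]
    {x y : Matrix n n K} (hx : x.det ≠ 0) (hy : y.det ≠ 0) (i k : n) :
    vecMulVec (x i) (fun l => y l k) ≠ 0 := by
  rw [Ne, vecMulVec_eq_zero, not_or]
  exact ⟨fun h => hx (det_eq_zero_of_row_eq_zero i (congrFun h)),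
    fun h => hy (det_eq_zero_of_column_eq_zero k (congrFun h))⟩

theorem exMat_map_firstOrderHom (F : Type u) [Field F] :
    (exMat F).map (firstOrderHom ![single 0 0 1, single 0 1 1, single 1 0 1, single 1 1 1]) =
      genericMatrix F (Fin 2) := by
  ext j l : 1
  fin_cases j <;> fin_cases l <;> simp [exMat, exGen, genericMatrix]

theorem stmt14 (F : Type u) [Field F] :
    ¬ ∃ X Y : (Matrix (Fin 2) (Fin 2) (ExRing F))ˣ,
        (X.val * exMat F * Y.val).IsDiag := by
  rintro ⟨X, Y, hdiag⟩
  let φ : ExRing F →+* TrivSqZeroExt F (Matrix (Fin 2) (Fin 2) F) :=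
    firstOrderHom ![single 0 0 1, single 0 1 1, single 1 0 1, single 1 1 1]
  let residue := (fstHom F F (Matrix (Fin 2) (Fin 2) F)).toRingHom.comp φ
  have h01 : ((X.val.map φ * genericMatrix F (Fin 2) * Y.val.map φ) 0 1).snd = 0 := by
    rw [← exMat_map_firstOrderHom, ← Matrix.map_mul, ← Matrix.map_mul, map_apply,
      hdiag (by decide), map_zero, snd_zero]
  rw [snd_mul_genericMatrix_mul] at h01
  exact vecMulVec_row_col_ne_zero (det_map_val_ne_zero residue X)
    (det_map_val_ne_zero residue Y) 0 1 h01
end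

section
/- A unital ring R is separative if and only if the following holds: whenever A, B, C are finitely generated projective right R-modules such that A ⊕ C ≅ B ⊕ C and C is isomorphic to a direct summand of A^n and to a direct summand of B^n for some n ≥ 1, then A ≅ B. -/
universe u

/-- A ring `R` is *separative* if for all finitely generated projective right `R`-modules
(= `Rᵐᵒᵖ`-modules) `A`, `B`: `A ⊕ A ≅ A ⊕ B` and `A ⊕ B ≅ B ⊕ B` imply `A ≅ B`. -/
def IsSeparativeRing (R : Type u) [Ring R] : Prop :=
  ∀ (A B : Type u) [AddCommGroup A] [AddCommGroup B] [Module Rᵐᵒᵖ A] [Module Rᵐᵒᵖ B],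
    Module.Finite Rᵐᵒᵖ A → Module.Projective Rᵐᵒᵖ A →
    Module.Finite Rᵐᵒᵖ B → Module.Projective Rᵐᵒᵖ B →
    Nonempty ((A × A) ≃ₗ[Rᵐᵒᵖ] A × B) → Nonempty ((A × B) ≃ₗ[Rᵐᵒᵖ] B × B) →
    Nonempty (A ≃ₗ[Rᵐᵒᵖ] B)

/-!
Pass to the commutative monoid `V(R)` of isomorphism classes of finitely generated projective
right `R`-modules; `R` is separative exactly when `V(R)` is, i.e. `2a = a + b = 2b` forces
`a = b`. Given `a + c = b + c` with `c + d = n a` and `c + e = n b`, one gets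
`b + n a = a + n a` and `a + n b = b + n b`, hence `(n + j) a = n a + j b` for all `j`;
separativity applied to `n a, n b` gives `m a = m b` for all `m ≥ n`. A downward induction,
using separativity twice more at each step, brings `m` down to `1`.
Conversely, `A ⊕ A ≅ A ⊕ B ≅ B ⊕ B` is the case `C = A`, `n = 2` of the criterion.
-/

section SeparativeMonoid

variable {M : Type*} [AddCommMonoid M]

variable (M) in
def IsSeparative : Prop :=
  ∀ x y : M, x + x = x + y → x + y = y + y → x = y

theorem IsSeparative.eq_of_add_eq (hM : IsSeparative M) {x y z : M}
    (hx : x + x = z) (hxy : x + y = z) (hy : y + y = z) : x = y :=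
  hM x y (hx.trans hxy.symm) (hxy.trans hy.symm)

theorem IsSeparative.add_nsmul_eq_succ_nsmul (hM : IsSeparative M) {a b : M} {k : ℕ}
    (h : ∀ m, k + 1 < m → m • a = m • b) : a + (k + 1) • b = (k + 2) • a := by
  apply hM.eq_of_add_eq (z := (2 * k + 4) • a)
  · calc (a + (k + 1) • b) + (a + (k + 1) • b) = 2 • a + (2 * k + 2) • b := by module
      _ = (2 * k + 4) • a := by rw [← h (2 * k + 2) (by omega)]; module
  · calc (a + (k + 1) • b) + (k + 2) • a = a + (k + 1) • b + (k + 2) • b := by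
          rw [h (k + 2) (by omega)]
      _ = a + (2 * k + 3) • b := by module
      _ = (2 * k + 4) • a := by rw [← h (2 * k + 3) (by omega)]; module
  · module

theorem IsSeparative.nsmul_eq_of_forall_lt (hM : IsSeparative M) {a b : M} {k : ℕ}
    (h : ∀ m, k < m → m • a = m • b) : k • a = k • b := by
  cases k with
  | zero => simp only [zero_nsmul]
  | succ k =>
    have hba := hM.add_nsmul_eq_succ_nsmul fun m hm => (h m hm).symm
    apply hM.eq_of_add_eq (z := (2 * k + 2) • b)
    · rw [← h (2 * k + 2) (by omega)]; module
    · calc (k + 1) • a + (k + 1) • b = k • b + (b + (k + 1) • a) := by module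
        _ = (2 * k + 2) • b := by rw [hba]; module
    · module

theorem IsSeparative.eq_of_forall_le_nsmul_eq (hM : IsSeparative M) {a b : M} {n : ℕ}
    (h : ∀ m, n ≤ m → m • a = m • b) : a = b := by
  induction n with
  | zero => simpa using h 1 (Nat.zero_le 1)
  | succ k ih =>
    refine ih fun m hm => ?_
    rcases hm.eq_or_lt with rfl | hm
    · exact hM.nsmul_eq_of_forall_lt h
    · exact h m hm

theorem add_nsmul_eq_nsmul_add_nsmul {a b : M} {n : ℕ} (h : b + n • a = a + n • a) (j : ℕ) :
    (n + j) • a = n • a + j • b := by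
  induction j with
  | zero => simp
  | succ j ih =>
    calc (n + (j + 1)) • a = (n + j) • a + a := by module
      _ = j • b + (a + n • a) := by rw [ih]; module
      _ = n • a + (j + 1) • b := by rw [← h]; module

theorem IsSeparative.nsmul_eq_of_le (hM : IsSeparative M) {a b : M} {n : ℕ}
    (ha : b + n • a = a + n • a) (hb : a + n • b = b + n • b) :
    ∀ m, n ≤ m → m • a = m • b := by
  have hn : n • a = n • b := by
    refine hM.eq_of_add_eq ?_ rfl ?_
    · rw [← add_nsmul, add_nsmul_eq_nsmul_add_nsmul ha]
    · rw [← add_nsmul, add_nsmul_eq_nsmul_add_nsmul hb, add_comm]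
  intro m hm
  obtain ⟨j, rfl⟩ := Nat.exists_eq_add_of_le hm
  rw [add_nsmul_eq_nsmul_add_nsmul ha, hn, ← add_nsmul]

theorem IsSeparative.add_right_cancel_of_add_eq_nsmul (hM : IsSeparative M) {a b c d e : M}
    {n : ℕ} (h : a + c = b + c) (hd : c + d = n • a) (he : c + e = n • b) : a = b := by
  refine hM.eq_of_forall_le_nsmul_eq (hM.nsmul_eq_of_le (n := n) ?_ ?_)
  · rw [← hd, ← add_assoc, ← h, add_assoc]
  · rw [← he, ← add_assoc, h, add_assoc]

end SeparativeMonoid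

section FGProj

variable (S : Type u) [Ring S]

structure FGProj : Type (u + 1) where
  carrier : Type u
  [addCommGroup : AddCommGroup carrier]
  [module : Module S carrier]
  [finite : Module.Finite S carrier]
  [projective : Module.Projective S carrier]

attribute [instance] FGProj.addCommGroup FGProj.module FGProj.finite FGProj.projective

instance : CoeSort (FGProj S) (Type u) := ⟨FGProj.carrier⟩

instance FGProj.isoSetoid : Setoid (FGProj S) where
  r X Y := Nonempty (X ≃ₗ[S] Y)
  iseqv := ⟨fun _ => ⟨.refl S _⟩, fun ⟨e⟩ => ⟨e.symm⟩, fun ⟨e⟩ ⟨f⟩ => ⟨e.trans f⟩⟩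

/-- The monoid `V(S)`. -/
def FGProjClasses : Type (u + 1) := Quotient (FGProj.isoSetoid S)

variable {S}

instance Module.Projective.pi_fintype {ι : Type*} [Fintype ι] (A : Type*) [AddCommGroup A]
    [Module S A] [Module.Projective S A] : Module.Projective S (ι → A) :=
  .of_equiv (DFinsupp.linearEquivFunOnFintype (M := fun _ : ι => A))

theorem exists_linearEquiv_prod_of_comp_eq_id {C E : Type u} [AddCommGroup C] [Module S C]
    [AddCommGroup E] [Module S E] [Module.Finite S E] [Module.Projective S E]
    {f : C →ₗ[S] E} {g : E →ₗ[S] C} (hgf : g ∘ₗ f = LinearMap.id) :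
    ∃ D : FGProj S, Nonempty (E ≃ₗ[S] C × D) := by
  let e : E ≃ₗ[S] C × (E ⧸ LinearMap.range f) :=
    ((LinearMap.exact_map_mkQ_range f).splitInjectiveEquiv (Submodule.mkQ_surjective _)
      ⟨g, hgf⟩).1
  have : Module.Projective S (E ⧸ LinearMap.range f) :=
    .of_split (e.symm.toLinearMap ∘ₗ LinearMap.inr S _ _) (LinearMap.snd S _ _ ∘ₗ e.toLinearMap)
      (by ext; simp)
  exact ⟨⟨E ⧸ LinearMap.range f⟩, ⟨e⟩⟩

namespace FGProjClasses

def mk (X : FGProj S) : FGProjClasses S := Quotient.mk _ X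

theorem mk_eq_mk {X Y : FGProj S} : mk X = mk Y ↔ Nonempty (X ≃ₗ[S] Y) := Quotient.eq

instance : Zero (FGProjClasses S) := ⟨mk ⟨PUnit⟩⟩

instance : Add (FGProjClasses S) :=
  ⟨Quotient.map₂ (fun X Y => ⟨X × Y⟩) fun _ _ ⟨e⟩ _ _ ⟨f⟩ => ⟨e.prodCongr f⟩⟩

theorem mk_prod (X Y : FGProj S) : mk ⟨X × Y⟩ = mk X + mk Y := rfl

instance : AddCommMonoid (FGProjClasses S) where
  nsmul := nsmulRec
  add_assoc := by
    rintro ⟨X⟩ ⟨Y⟩ ⟨Z⟩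
    exact Quotient.sound ⟨LinearEquiv.prodAssoc S X Y Z⟩
  zero_add := by
    rintro ⟨X⟩
    exact Quotient.sound ⟨LinearEquiv.uniqueProd⟩
  add_zero := by
    rintro ⟨X⟩
    exact Quotient.sound ⟨LinearEquiv.prodUnique⟩
  add_comm := by
    rintro ⟨X⟩ ⟨Y⟩
    exact Quotient.sound ⟨LinearEquiv.prodComm S X Y⟩

theorem mk_pi (X : FGProj S) (n : ℕ) : mk ⟨Fin n → X⟩ = n • mk X := by
  induction n with
  | zero => exact Quotient.sound ⟨LinearEquiv.ofSubsingleton _ _⟩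
  | succ n ih =>
    rw [succ_nsmul', ← ih, ← mk_prod]
    exact Quotient.sound ⟨(Fin.consLinearEquiv S fun _ => X).symm⟩

end FGProjClasses

open FGProjClasses in
theorem nonempty_linearEquiv_of_isSeparative (hV : IsSeparative (FGProjClasses S))
    {A B C : Type u} [AddCommGroup A] [AddCommGroup B] [AddCommGroup C]
    [Module S A] [Module S B] [Module S C]
    [Module.Finite S A] [Module.Projective S A] [Module.Finite S B] [Module.Projective S B]
    [Module.Finite S C] [Module.Projective S C]
    (hAC : Nonempty ((A × C) ≃ₗ[S] B × C)) {n : ℕ}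
    {fA : C →ₗ[S] (Fin n → A)} {gA : (Fin n → A) →ₗ[S] C} (hA : gA ∘ₗ fA = LinearMap.id)
    {fB : C →ₗ[S] (Fin n → B)} {gB : (Fin n → B) →ₗ[S] C} (hB : gB ∘ₗ fB = LinearMap.id) :
    Nonempty (A ≃ₗ[S] B) := by
  obtain ⟨D, ⟨eD⟩⟩ := exists_linearEquiv_prod_of_comp_eq_id hA
  obtain ⟨E, ⟨eE⟩⟩ := exists_linearEquiv_prod_of_comp_eq_id hB
  refine mk_eq_mk.mp <| hV.add_right_cancel_of_add_eq_nsmul (a := mk ⟨A⟩) (b := mk ⟨B⟩)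
    (c := mk ⟨C⟩) (d := mk D) (e := mk E) (n := n) (mk_eq_mk.mpr hAC) ?_ ?_
  · rw [← mk_pi, ← mk_prod]; exact mk_eq_mk.mpr ⟨eD.symm⟩
  · rw [← mk_pi, ← mk_prod]; exact mk_eq_mk.mpr ⟨eE.symm⟩

theorem exists_comp_eq_id_fin_succ (M : Type*) [AddCommMonoid M] [Module S M] (n : ℕ) :
    ∃ (f : M →ₗ[S] (Fin (n + 1) → M)) (g : (Fin (n + 1) → M) →ₗ[S] M),
      g ∘ₗ f = LinearMap.id :=
  ⟨LinearMap.pi fun _ => LinearMap.id, LinearMap.proj 0, rfl⟩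

theorem exists_comp_eq_id_fin_two_of_linearEquiv {A B : Type*} [AddCommMonoid A] [AddCommMonoid B]
    [Module S A] [Module S B] (e : (A × B) ≃ₗ[S] B × B) :
    ∃ (f : A →ₗ[S] (Fin 2 → B)) (g : (Fin 2 → B) →ₗ[S] A), g ∘ₗ f = LinearMap.id :=
  ⟨(LinearEquiv.finTwoArrow S B).symm ∘ₗ e.toLinearMap ∘ₗ LinearMap.inl S A B,
    LinearMap.fst S A B ∘ₗ e.symm.toLinearMap ∘ₗ (LinearEquiv.finTwoArrow S B).toLinearMap,
    by ext; simp⟩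

end FGProj

theorem IsSeparativeRing.isSeparative_fgProjClasses {R : Type u} [Ring R]
    (hR : IsSeparativeRing R) : IsSeparative (FGProjClasses Rᵐᵒᵖ) := by
  rintro ⟨X⟩ ⟨Y⟩ h₁ h₂
  exact Quotient.sound (hR X Y inferInstance inferInstance inferInstance inferInstance
    (Quotient.exact h₁) (Quotient.exact h₂))

/-- "`C` is isomorphic to a direct summand of `Aⁿ` (resp. `Bⁿ`)" is
expressed by a split `Rᵐᵒᵖ`-linear injection `C → Aⁿ` (resp. `C → Bⁿ`). -/
theorem stmt17 (R : Type u) [Ring R] :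
    IsSeparativeRing R ↔
      ∀ (A B C : Type u) [AddCommGroup A] [AddCommGroup B] [AddCommGroup C]
        [Module Rᵐᵒᵖ A] [Module Rᵐᵒᵖ B] [Module Rᵐᵒᵖ C],
        Module.Finite Rᵐᵒᵖ A → Module.Projective Rᵐᵒᵖ A →
        Module.Finite Rᵐᵒᵖ B → Module.Projective Rᵐᵒᵖ B →
        Module.Finite Rᵐᵒᵖ C → Module.Projective Rᵐᵒᵖ C →
        Nonempty ((A × C) ≃ₗ[Rᵐᵒᵖ] B × C) →
        (∃ n : ℕ, 1 ≤ n ∧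
          (∃ (f : C →ₗ[Rᵐᵒᵖ] (Fin n → A)) (g : (Fin n → A) →ₗ[Rᵐᵒᵖ] C),
            g.comp f = LinearMap.id) ∧
          (∃ (f : C →ₗ[Rᵐᵒᵖ] (Fin n → B)) (g : (Fin n → B) →ₗ[Rᵐᵒᵖ] C),
            g.comp f = LinearMap.id)) →
        Nonempty (A ≃ₗ[Rᵐᵒᵖ] B) := by
  constructor
  · rintro hR A B C _ _ _ _ _ _ _ _ _ _ _ _ hAC ⟨n, -, ⟨fA, gA, hA⟩, ⟨fB, gB, hB⟩⟩
    exact nonempty_linearEquiv_of_isSeparative hR.isSeparative_fgProjClasses hAC hA hB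
  · rintro H A B _ _ _ _ finA projA finB projB ⟨e₁⟩ ⟨e₂⟩
    exact H A B A finA projA finB projB finA projA ⟨e₁.trans (LinearEquiv.prodComm _ A B)⟩
      ⟨2, one_le_two, exists_comp_eq_id_fin_succ A 1, exists_comp_eq_id_fin_two_of_linearEquiv e₂⟩
end
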